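/- arXiv:2111.07414 — 9 statements merged into one kernel-verified Lean document; each statement's English description precedes it below -/
import Mathlib

section
/- Let G = (V,A) be a digraph with root r, nonnegative arc costs c and nonnegative node penalties π. For each non-root node v choose θ_v ≥ 0 with θ_v ≤ min{min over arcs (u,v) of c_{uv}, π_v}, and set c̃_{uv} = c_{uv} − θ_v, π̃_v = π_v − θ_v. Then the optimal prize-collecting cost over collections of r-rooted walks for instance (G,c̃,π̃) is at most the optimal prize-collecting cost for (G,c,π) minus Σ_{v≠r} θ_v. -/
/-! Fix a collection `C` of `r`-rooted walks. Lowering each arc cost by `θ` of its head lowers the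
cost of a walk by the `θ`-sum over its nodes after the first (with multiplicity), and lowering the
penalties lowers the penalty part by `θ` of the unvisited nodes. Since every walk starts at `r`,
each non-root node is unvisited or occurs after the first position of some walk, so for `θ ≥ 0`
the value of `C` drops by at least `∑_{v ≠ r} θ v`. The shifted costs and penalties are still
nonnegative, so the shifted optimum is at most the shifted value of every `C`. -/

open Finset

/-- Cost of a walk given by its vertex sequence. -/
def walkCost {V : Type*} (c : V → V → ℝ) (P : List V) : ℝ :=
  ((P.zip P.tail).map fun q => c q.1 q.2).sum

/-- A walk rooted at `r` in the digraph with arc set `A`. -/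
def IsWalk {V : Type*} (A : Finset (V × V)) (r : V) (P : List V) : Prop :=
  P.head? = some r ∧ P.Chain' (fun u v => (u, v) ∈ A)

/-- Minimum prize-collecting cost over collections of `r`-rooted walks. -/
noncomputable def pcwOpt {V : Type*} [Fintype V] [DecidableEq V]
    (A : Finset (V × V)) (c : V → V → ℝ) (π : V → ℝ) (r : V) : ℝ :=
  sInf {z : ℝ | ∃ C : List (List V), (∀ P ∈ C, IsWalk A r P) ∧
    z = (C.map (walkCost c)).sum +
      ∑ v ∈ Finset.univ.filter (fun v => ∀ P ∈ C, v ∉ P), π v}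

section

variable {V : Type*}

lemma List.sum_toFinset_le_sum_map [DecidableEq V] {f : V → ℝ} {l : List V}
    (hf : ∀ x ∈ l, 0 ≤ f x) : ∑ x ∈ l.toFinset, f x ≤ (l.map f).sum := by
  rw [Finset.sum_list_map_count]
  refine Finset.sum_le_sum fun x hx => ?_
  have hx : x ∈ l := List.mem_toFinset.mp hx
  rw [nsmul_eq_mul]
  exact le_mul_of_one_le_left (hf x hx) (by exact_mod_cast List.count_pos_iff.mpr hx)

lemma mem_tail_of_head?_eq {P : List V} {r v : V} (hP : P.head? = some r) (hv : v ∈ P)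
    (hvr : v ≠ r) : v ∈ P.tail := by
  obtain _ | ⟨a, t⟩ := P
  · simp at hP
  · obtain rfl : a = r := by simpa using hP
    exact (List.mem_cons.mp hv).resolve_left hvr

@[simp]
lemma walkCost_cons_cons (c : V → V → ℝ) (a b : V) (l : List V) :
    walkCost c (a :: b :: l) = c a b + walkCost c (b :: l) := by
  simp [walkCost]

lemma walkCost_nonneg {A : Finset (V × V)} {c : V → V → ℝ}
    (hc : ∀ u v, (u, v) ∈ A → 0 ≤ c u v) {P : List V}
    (hP : P.IsChain fun u v => (u, v) ∈ A) : 0 ≤ walkCost c P := by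
  induction hP with
  | nil => simp [walkCost]
  | singleton => simp [walkCost]
  | cons_cons hab _ ih => rw [walkCost_cons_cons]; exact add_nonneg (hc _ _ hab) ih

lemma walkCost_sub_tail_sum (c : V → V → ℝ) (θ : V → ℝ) (P : List V) :
    walkCost (fun u v => c u v - θ v) P = walkCost c P - (P.tail.map θ).sum := by
  induction P with
  | nil => simp [walkCost]
  | cons a t ih =>
    obtain _ | ⟨b, t⟩ := t
    · simp [walkCost]
    · simp only [walkCost_cons_cons, List.tail_cons, List.map_cons, List.sum_cons] at ih ⊢
      rw [ih]
      ring

variable [Fintype V] [DecidableEq V]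

-- the value of a collection `C`, whose infimum over collections of walks is `pcwOpt`
def pcwValue (c : V → V → ℝ) (π : V → ℝ) (C : List (List V)) : ℝ :=
  (C.map (walkCost c)).sum + ∑ v ∈ univ.filter (fun v => ∀ P ∈ C, v ∉ P), π v

lemma pcwValue_nonneg {A : Finset (V × V)} {r : V} {c : V → V → ℝ} {π : V → ℝ}
    (hc : ∀ u v, (u, v) ∈ A → 0 ≤ c u v) (hπ : ∀ v, 0 ≤ π v) {C : List (List V)}
    (hC : ∀ P ∈ C, IsWalk A r P) : 0 ≤ pcwValue c π C := by
  refine add_nonneg (List.sum_nonneg fun x hx => ?_) (sum_nonneg fun v _ => hπ v)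
  obtain ⟨P, hP, rfl⟩ := List.mem_map.mp hx
  exact walkCost_nonneg hc (hC P hP).2

lemma pcwOpt_le_pcwValue {A : Finset (V × V)} {r : V} {c : V → V → ℝ} {π : V → ℝ}
    (hc : ∀ u v, (u, v) ∈ A → 0 ≤ c u v) (hπ : ∀ v, 0 ≤ π v) {C : List (List V)}
    (hC : ∀ P ∈ C, IsWalk A r P) : pcwOpt A c π r ≤ pcwValue c π C :=
  -- nonnegativity gives the lower bound without which `sInf` would be the junk value `0`
  csInf_le ⟨0, by rintro _ ⟨C, hC, rfl⟩; exact pcwValue_nonneg hc hπ hC⟩ ⟨C, hC, rfl⟩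

lemma le_pcwOpt {A : Finset (V × V)} {r : V} {c : V → V → ℝ} {π : V → ℝ} {b : ℝ}
    (h : ∀ C : List (List V), (∀ P ∈ C, IsWalk A r P) → b ≤ pcwValue c π C) :
    b ≤ pcwOpt A c π r :=
  le_csInf ⟨_, [], by simp, rfl⟩ (by rintro _ ⟨C, hC, rfl⟩; exact h C hC)

lemma sum_erase_le_sum_tail_add_sum_uncovered {r : V} {θ : V → ℝ} (hθ : ∀ v, 0 ≤ θ v)
    {C : List (List V)} (hC : ∀ P ∈ C, P.head? = some r) :
    ∑ v ∈ univ.erase r, θ v ≤ (C.map fun P => (P.tail.map θ).sum).sum +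
      ∑ v ∈ univ.filter (fun v => ∀ P ∈ C, v ∉ P), θ v := by
  set U := univ.filter (fun v => ∀ P ∈ C, v ∉ P)
  set T := C.flatMap List.tail
  have hcover : univ.erase r ⊆ T.toFinset ∪ U := by
    intro v hv
    by_cases hvU : v ∈ U
    · exact mem_union_right _ hvU
    · obtain ⟨P, hP, hvP⟩ : ∃ P ∈ C, v ∈ P := by simpa [U] using hvU
      exact mem_union_left _ (List.mem_toFinset.mpr (List.mem_flatMap.mpr
        ⟨P, hP, mem_tail_of_head?_eq (hC P hP) hvP (ne_of_mem_erase hv)⟩))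
  have hT : (T.map θ).sum = (C.map fun P => (P.tail.map θ).sum).sum := by
    rw [List.map_flatMap, List.flatMap_def, List.sum_flatten, List.map_map]
    rfl
  calc ∑ v ∈ univ.erase r, θ v ≤ ∑ v ∈ T.toFinset ∪ U, θ v :=
        sum_le_sum_of_subset_of_nonneg hcover fun v _ _ => hθ v
    _ ≤ ∑ v ∈ T.toFinset, θ v + ∑ v ∈ U, θ v := by
        rw [← sum_union_inter]
        exact le_add_of_nonneg_right (sum_nonneg fun v _ => hθ v)
    _ ≤ (C.map fun P => (P.tail.map θ).sum).sum + ∑ v ∈ U, θ v := by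
        rw [← hT]
        gcongr
        exact List.sum_toFinset_le_sum_map fun v _ => hθ v

lemma pcwValue_sub_le {A : Finset (V × V)} {r : V} (c : V → V → ℝ) (π : V → ℝ)
    {θ : V → ℝ} (hθ : ∀ v, 0 ≤ θ v) {C : List (List V)} (hC : ∀ P ∈ C, IsWalk A r P) :
    pcwValue (fun u v => c u v - θ v) (fun v => π v - θ v) C ≤
      pcwValue c π C - ∑ v ∈ univ.erase r, θ v := by
  have hroot := sum_erase_le_sum_tail_add_sum_uncovered hθ fun P hP => (hC P hP).1
  have hcost : (C.map (walkCost fun u v => c u v - θ v)).sum =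
      (C.map (walkCost c)).sum - (C.map fun P => (P.tail.map θ).sum).sum := by
    rw [eq_sub_iff_add_eq, ← List.sum_map_add]
    simp [walkCost_sub_tail_sum]
  rw [pcwValue, pcwValue, hcost, sum_sub_distrib]
  linarith

end

/-- Reducing costs/penalties by `θ` decreases the optimal
prize-collecting walks value by at least `∑_{v ≠ r} θ v`. -/
theorem pcwOpt_shift
    {V : Type*} [Fintype V] [DecidableEq V]
    (A : Finset (V × V)) (r : V) (c : V → V → ℝ) (π θ : V → ℝ)
    (hc : ∀ u v, 0 ≤ c u v) (hπ : ∀ v, 0 ≤ π v)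
    (hθ0 : ∀ v, 0 ≤ θ v) (hθr : θ r = 0)
    (hθc : ∀ u v, v ≠ r → (u, v) ∈ A → θ v ≤ c u v)
    (hθπ : ∀ v, v ≠ r → θ v ≤ π v) :
    pcwOpt A (fun u v => c u v - θ v) (fun v => π v - θ v) r ≤
      pcwOpt A c π r - ∑ v ∈ Finset.univ.erase r, θ v := by
  have hc' : ∀ u v, (u, v) ∈ A → 0 ≤ c u v - θ v := fun u v huv => by
    obtain rfl | hv := eq_or_ne v r
    · simpa [hθr] using hc u v
    · exact sub_nonneg.mpr (hθc u v hv huv)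
  have hπ' : ∀ v, 0 ≤ π v - θ v := fun v => by
    obtain rfl | hv := eq_or_ne v r
    · simpa [hθr] using hπ v
    · exact sub_nonneg.mpr (hθπ v hv)
  rw [le_sub_iff_add_le]
  refine le_pcwOpt fun C hC => ?_
  linarith [pcwOpt_le_pcwValue hc' hπ' hC, pcwValue_sub_le c π hθ0 hC]
end

section
/- Let D=(N∪{s},E) be an Eulerian multidigraph (every node has in-degree equal to out-degree). Then for every arc (u,s) entering s, there exists an arc (s,w) leaving s such that replacing the pair of arcs (u,s),(s,w) by a new parallel copy of the arc (u,w) preserves λ(v,t), the maximum number of arc-disjoint directed v-to-t paths, for all pairs v,t ∈ N. -/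
/-- There exist `n` pairwise arc-disjoint directed `v`-`t` paths in the multidigraph
with arc multiset `E`: a list of `n` vertex sequences, each starting at `v` and ending
at `t`, whose combined multiset of traversed arcs is contained in `E`. -/
def HasDisjPaths {V : Type*} [DecidableEq V]
    (E : Multiset (V × V)) (v t : V) (n : ℕ) : Prop :=
  ∃ Ps : List (List V), Ps.length = n ∧
    (∀ P ∈ Ps, P.head? = some v ∧ P.getLast? = some t) ∧
    (Ps.map fun P => ((P.zip P.tail : List (V × V)) : Multiset (V × V))).sum ≤ E

/-!
By Menger's theorem, `λ(v, t) ≥ n` iff every vertex set containing `t` but not `v` has in-degree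
`ρ ≥ n`. Splitting off `(u, s), (s, w)` lowers `ρ(X)` by at most one, and only when `X` or `Xᶜ`
contains `u` and `w` but not `s`. As `ρ(X) = ρ(Xᶜ)` in an Eulerian digraph, if the splitting lowers
some `λ(v, t)` then `u` and `w` lie in a tight set: one that avoids `s` and is a minimum cut between
two vertices other than `s`. Tight sets containing `u` are closed under union, by submodularity and
posimodularity of `ρ`, the latter strict thanks to the arc `(u, s)`. So if no `w` worked, the union
`T` of the tight sets containing `u` and an out-neighbour of `s` would be tight and receive every
arc leaving `s`; then `ρ(T ∪ {s}) < ρ(T)`, although `T ∪ {s}` still separates the pair for which `T`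
is a minimum cut.
-/

namespace FrankJackson

open scoped Classical

variable {V : Type*}

def walkArcs (P : List V) : Multiset (V × V) := P.zip P.tail

@[simp]
theorem walkArcs_cons_cons (a b : V) (l : List V) :
    walkArcs (a :: b :: l) = (a, b) ::ₘ walkArcs (b :: l) := rfl

/-- The in-degree `ρ(X)` of a vertex set; its out-degree is `cut E Xᶜ`. -/
noncomputable def cut (E : Multiset (V × V)) (X : Set V) : ℕ :=
  E.countP fun a => a.1 ∉ X ∧ a.2 ∈ X

theorem cut_cons (a : V × V) (E : Multiset (V × V)) (X : Set V) :
    cut (a ::ₘ E) X = cut E X + if a.1 ∉ X ∧ a.2 ∈ X then 1 else 0 :=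
  Multiset.countP_cons _ _ _

theorem cut_mono {E F : Multiset (V × V)} (h : E ≤ F) (X : Set V) : cut E X ≤ cut F X :=
  Multiset.countP_le_of_le _ h

theorem cut_compl_eq_zero {E : Multiset (V × V)} {X : Set V}
    (h : ∀ a ∈ E, a.1 ∈ X → a.2 ∈ X) : cut E Xᶜ = 0 := by
  simp only [cut, Multiset.countP_eq_zero]
  exact fun a ha hX => hX.2 (h a ha (not_not.1 hX.1))

theorem cut_le_cut_of_count_le [DecidableEq V] {E F : Multiset (V × V)} {X : Set V}
    (h : ∀ a, a.1 ∉ X → a.2 ∈ X → E.count a ≤ F.count a) : cut E X ≤ cut F X := by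
  rw [cut, cut, Multiset.countP_eq_card_filter, Multiset.countP_eq_card_filter]
  refine Multiset.card_le_card (Multiset.le_iff_count.2 fun a => ?_)
  rw [Multiset.count_filter, Multiset.count_filter]
  split_ifs with ha
  exacts [h a ha.1 ha.2, le_rfl]

theorem one_le_cut_walkArcs {X : Set V} :
    ∀ {P : List V} {v t : V}, P.head? = some v → P.getLast? = some t → v ∉ X → t ∈ X →
      1 ≤ cut (walkArcs P) X
  | [], _, _, hv, _, _, _ => by simp at hv
  | [a], v, t, hv, ht, hvX, htX => by
    simp only [List.head?_cons, List.getLast?_singleton, Option.some.injEq] at hv ht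
    exact absurd (hv ▸ ht ▸ htX) hvX
  | a :: b :: l, v, t, hv, ht, hvX, htX => by
    simp only [List.head?_cons, Option.some.injEq] at hv
    subst hv
    rw [List.getLast?_cons_cons] at ht
    rw [walkArcs_cons_cons, cut_cons]
    by_cases hb : b ∈ X
    · simp [hvX, hb]
    · exact (one_le_cut_walkArcs rfl ht hb htX).trans (Nat.le_add_right _ _)

theorem _root_.HasDisjPaths.le_cut [DecidableEq V] {E : Multiset (V × V)} {v t : V} {n : ℕ}
    {X : Set V} (h : HasDisjPaths E v t n) (ht : t ∈ X) (hv : v ∉ X) : n ≤ cut E X := by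
  obtain ⟨Ps, rfl, hends, hle⟩ := h
  calc Ps.length ≤ (Ps.map fun P => cut (walkArcs P) X).sum := by
        rw [← List.length_map (f := fun P => cut (walkArcs P) X)]
        refine List.length_le_sum_of_one_le _ ?_
        simp only [List.mem_map]
        rintro _ ⟨P, hP, rfl⟩
        exact one_le_cut_walkArcs (hends P hP).1 (hends P hP).2 hv ht
    _ = cut (Ps.map walkArcs).sum X := by
        rw [cut, ← Multiset.coe_countPAddMonoidHom, map_list_sum, List.map_map]; rfl
    _ ≤ cut E X := cut_mono hle X

section Excess

variable [DecidableEq V]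

def inDeg (E : Multiset (V × V)) (y : V) : ℕ := E.countP (·.2 = y)

def outDeg (E : Multiset (V × V)) (y : V) : ℕ := E.countP (·.1 = y)

def IsEulerian (E : Multiset (V × V)) : Prop := ∀ y, inDeg E y = outDeg E y

def excess (E : Multiset (V × V)) (y : V) : ℤ := inDeg E y - outDeg E y

def IsFlow (F : Multiset (V × V)) (v t : V) (m : ℤ) : Prop :=
  ∀ y, excess F y = (if y = t then m else 0) - (if y = v then m else 0)

@[simp]
theorem excess_zero (y : V) : excess (0 : Multiset (V × V)) y = 0 := by
  simp [excess, inDeg, outDeg]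

theorem excess_cons (a : V × V) (E : Multiset (V × V)) (y : V) :
    excess (a ::ₘ E) y =
      excess E y + (if a.2 = y then 1 else 0) - (if a.1 = y then 1 else 0) := by
  simp only [excess, inDeg, outDeg, Multiset.countP_cons]
  push_cast
  ring

theorem excess_add (E F : Multiset (V × V)) (y : V) :
    excess (E + F) y = excess E y + excess F y := by
  simp only [excess, inDeg, outDeg, Multiset.countP_add]
  push_cast
  ring

theorem excess_sub {E F : Multiset (V × V)} (h : F ≤ E) (y : V) :
    excess (E - F) y = excess E y - excess F y := by
  rw [eq_sub_iff_add_eq, ← excess_add, tsub_add_cancel_of_le h]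

theorem excess_map_swap (E : Multiset (V × V)) (y : V) :
    excess (E.map Prod.swap) y = -excess E y := by
  simp only [excess, inDeg, outDeg]
  rw [Multiset.countP_map, Multiset.countP_map]
  simp only [Prod.snd_swap, Prod.fst_swap, Multiset.countP_eq_card_filter]
  ring

theorem cut_sub_cut_compl (E : Multiset (V × V)) (X : Set V) {S : Finset V}
    (hS : ∀ a ∈ E, a.1 ∈ S ∧ a.2 ∈ S) :
    (cut E X : ℤ) - cut E Xᶜ = ∑ y ∈ S with y ∈ X, excess E y := by
  induction E using Multiset.induction_on with
  | empty => simp [cut]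
  | cons a E ih =>
    obtain ⟨ha₁, ha₂⟩ := hS a (Multiset.mem_cons_self _ _)
    have ih := ih fun b hb => hS b (Multiset.mem_cons_of_mem hb)
    simp only [excess_cons, Finset.sum_sub_distrib, Finset.sum_add_distrib, Finset.sum_ite_eq,
      Finset.mem_filter, ha₁, ha₂, true_and, cut_cons, Set.mem_compl_iff, not_not]
    by_cases h₁ : a.1 ∈ X <;> by_cases h₂ : a.2 ∈ X <;> simp [h₁, h₂] <;> omega

theorem exists_finset_endpoints (E : Multiset (V × V)) :
    ∃ S : Finset V, ∀ a ∈ E, a.1 ∈ S ∧ a.2 ∈ S :=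
  ⟨(E.map Prod.fst + E.map Prod.snd).toFinset, fun a ha => by
    simp only [Multiset.mem_toFinset, Multiset.mem_add, Multiset.mem_map]
    exact ⟨.inl ⟨a, ha, rfl⟩, .inr ⟨a, ha, rfl⟩⟩⟩

theorem IsEulerian.cut_compl {E : Multiset (V × V)} (hE : IsEulerian E) (X : Set V) :
    cut E Xᶜ = cut E X := by
  obtain ⟨S, hS⟩ := exists_finset_endpoints E
  have h := cut_sub_cut_compl E X hS
  rw [Finset.sum_eq_zero fun y _ => by simp [excess, hE y]] at h
  omega

theorem IsFlow.cut_sub_cut_compl {F : Multiset (V × V)} {v t : V} {m : ℤ} (hF : IsFlow F v t m)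
    (X : Set V) :
    (cut F X : ℤ) - cut F Xᶜ = (if t ∈ X then m else 0) - (if v ∈ X then m else 0) := by
  obtain ⟨S, hS⟩ := exists_finset_endpoints F
  rw [FrankJackson.cut_sub_cut_compl F X (S := insert v (insert t S))
      fun a ha => ⟨by simp [(hS a ha).1], by simp [(hS a ha).2]⟩,
    Finset.sum_congr rfl fun y _ => hF y]
  simp only [Finset.sum_sub_distrib, Finset.sum_ite_eq', Finset.mem_filter, Finset.mem_insert,
    true_or, or_true, true_and]

theorem isFlow_walkArcs :
    ∀ {P : List V} {v t : V}, P.head? = some v → P.getLast? = some t → IsFlow (walkArcs P) v t 1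
  | [], _, _, hv, _ => by simp at hv
  | [a], v, t, hv, ht => by
    simp only [List.head?_cons, List.getLast?_singleton, Option.some.injEq] at hv ht
    subst hv ht
    intro y
    simp [walkArcs]
  | a :: b :: l, v, t, hv, ht => by
    simp only [List.head?_cons, Option.some.injEq] at hv
    subst hv
    rw [List.getLast?_cons_cons] at ht
    intro y
    rw [walkArcs_cons_cons, excess_cons, isFlow_walkArcs rfl ht y]
    grind

end Excess

theorem exists_nodup_isChain_of_reflTransGen {r : V → V → Prop} {a b : V}
    (h : Relation.ReflTransGen r a b) :
    ∃ P : List V, P.head? = some a ∧ P.getLast? = some b ∧ P.Nodup ∧ P.IsChain r := by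
  induction h using Relation.ReflTransGen.head_induction_on with
  | refl => exact ⟨[b], rfl, rfl, List.nodup_singleton b, List.isChain_singleton b⟩
  | @head a c hac _ ih =>
    obtain ⟨P, hP, hPb, hnd, hch⟩ := ih
    by_cases ha : a ∈ P
    · -- shortcut the cycle through `a`
      obtain ⟨P₁, P₂, rfl⟩ := List.append_of_mem ha
      refine ⟨a :: P₂, rfl, ?_, hnd.sublist (List.sublist_append_right _ _),
        hch.right_of_append⟩
      rwa [List.getLast?_append_of_ne_nil _ (List.cons_ne_nil _ _)] at hPb
    · obtain ⟨P', rfl⟩ := List.head?_eq_some_iff.1 hP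
      exact ⟨a :: c :: P', rfl, by rwa [List.getLast?_cons_cons], List.nodup_cons.2 ⟨ha, hnd⟩,
        hch.cons_cons hac⟩

theorem nodup_walkArcs : ∀ {P : List V}, P.Nodup → (walkArcs P).Nodup
  | [], _ | [_], _ => by simp [walkArcs]
  | a :: b :: l, h => by
    rw [walkArcs_cons_cons, Multiset.nodup_cons]
    refine ⟨fun hab => ?_, nodup_walkArcs (List.nodup_cons.1 h).2⟩
    exact (List.nodup_cons.1 h).1 (List.of_mem_zip (l₂ := l) hab).1

theorem rel_of_mem_walkArcs {r : V → V → Prop} :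
    ∀ {P : List V}, P.IsChain r → ∀ a ∈ walkArcs P, r a.1 a.2
  | [], _ | [_], _ => by simp [walkArcs]
  | a :: b :: l, h => by
    rw [List.isChain_cons_cons] at h
    simp only [walkArcs_cons_cons, Multiset.mem_cons, forall_eq_or_imp]
    exact ⟨h.1, rel_of_mem_walkArcs h.2⟩

section Menger

variable [DecidableEq V] {E F : Multiset (V × V)} {v t : V}

theorem hasDisjPaths_zero (E : Multiset (V × V)) (v t : V) : HasDisjPaths E v t 0 :=
  ⟨[], rfl, by simp, by simp⟩

theorem _root_.HasDisjPaths.mono {n : ℕ} (h : HasDisjPaths E v t n) (hEF : E ≤ F) :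
    HasDisjPaths F v t n :=
  let ⟨Ps, hlen, hends, hle⟩ := h
  ⟨Ps, hlen, hends, hle.trans hEF⟩

theorem _root_.HasDisjPaths.cons {n : ℕ} {P : List V} (hv : P.head? = some v)
    (ht : P.getLast? = some t) (hP : walkArcs P ≤ E) (h : HasDisjPaths (E - walkArcs P) v t n) :
    HasDisjPaths E v t (n + 1) := by
  obtain ⟨Ps, rfl, hends, hle⟩ := h
  exact ⟨P :: Ps, rfl, by simpa [hv, ht] using hends, add_le_of_le_tsub_left_of_le hP hle⟩

theorem IsFlow.sub {G : Multiset (V × V)} {m k : ℤ} (hF : IsFlow F v t m) (hG : IsFlow G v t k)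
    (hGF : G ≤ F) : IsFlow (F - G) v t (m - k) := by
  intro y
  rw [excess_sub hGF, hF y, hG y]
  split_ifs <;> ring

theorem IsFlow.exists_walk {m : ℤ} (hF : IsFlow F v t m) (hm : 0 < m) :
    ∃ P : List V, P.head? = some v ∧ P.getLast? = some t ∧ walkArcs P ≤ F := by
  have hreach : Relation.ReflTransGen (fun a b => (a, b) ∈ F) v t := by
    by_contra ht
    set R := {y | Relation.ReflTransGen (fun a b => (a, b) ∈ F) v y}
    have hvR : v ∈ R := .refl
    have htR : t ∉ R := ht
    have hnet := hF.cut_sub_cut_compl R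
    rw [cut_compl_eq_zero fun a ha h => h.tail ha] at hnet
    simp only [hvR, htR, if_true, if_false] at hnet
    omega
  obtain ⟨P, hv, ht, hnd, hch⟩ := exists_nodup_isChain_of_reflTransGen hreach
  exact ⟨P, hv, ht, (Multiset.le_iff_subset (nodup_walkArcs hnd)).2 (rel_of_mem_walkArcs hch)⟩

theorem hasDisjPaths_of_isFlow : ∀ {n : ℕ} {F : Multiset (V × V)}, IsFlow F v t n →
    HasDisjPaths F v t n
  | 0, F, _ => hasDisjPaths_zero F v t
  | n + 1, F, hF => by
    obtain ⟨P, hv, ht, hP⟩ := hF.exists_walk (by omega)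
    refine .cons hv ht hP (hasDisjPaths_of_isFlow ?_)
    simpa using hF.sub (isFlow_walkArcs hv ht) hP

def IsResidualArc (E F : Multiset (V × V)) (a b : V) : Prop :=
  F.count (a, b) < E.count (a, b) ∨ (b, a) ∈ F

theorem IsFlow.exists_succ_of_isChain {m : ℤ} (hF : IsFlow F v t m) (hFE : F ≤ E) {P : List V}
    (hv : P.head? = some v) (ht : P.getLast? = some t) (hnd : P.Nodup)
    (hch : P.IsChain (IsResidualArc E F)) :
    ∃ F' ≤ E, IsFlow F' v t (m + 1) := by
  set A := walkArcs P
  have hA : A.Nodup := nodup_walkArcs hnd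
  set fwd := A.filter fun a => F.count a < E.count a
  set bwd := (A.filter fun a => ¬F.count a < E.count a).map Prod.swap
  have hfwd : fwd ≤ E - F := (Multiset.le_iff_subset (hA.filter _)).2 fun a ha => by
    have := (Multiset.mem_filter.1 ha).2
    exact Multiset.count_pos.1 (by rw [Multiset.count_sub]; omega)
  have hbwd : bwd ≤ F := (Multiset.le_iff_subset ((hA.filter _).map Prod.swap_injective)).2
    fun a ha => by
      obtain ⟨b, hb, rfl⟩ := Multiset.mem_map.1 ha
      obtain ⟨hbA, hsat⟩ := Multiset.mem_filter.1 hb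
      exact (rel_of_mem_walkArcs hch b hbA).resolve_left hsat
  refine ⟨F - bwd + fwd, ?_, fun y => ?_⟩
  · calc F - bwd + fwd ≤ F + (E - F) := add_le_add tsub_le_self hfwd
      _ = E := add_tsub_cancel_of_le hFE
  · have hsplit := excess_add fwd (A.filter fun a => ¬F.count a < E.count a) y
    rw [Multiset.filter_add_not, isFlow_walkArcs hv ht y] at hsplit
    rw [excess_add, excess_sub hbwd, excess_map_swap, hF y]
    split_ifs at hsplit ⊢ <;> omega

theorem exists_isFlow_of_forall_le_cut {n : ℕ}
    (hcut : ∀ X : Set V, t ∈ X → v ∉ X → n ≤ cut E X) : ∀ m ≤ n, ∃ F ≤ E, IsFlow F v t m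
  | 0, _ => ⟨0, E.zero_le, fun y => by simp⟩
  | m + 1, hm => by
    obtain ⟨F, hFE, hF⟩ := exists_isFlow_of_forall_le_cut hcut m (by omega)
    have hreach : Relation.ReflTransGen (IsResidualArc E F) v t := by
      by_contra ht
      set X := {y | ¬Relation.ReflTransGen (IsResidualArc E F) v y}
      have hvX : v ∉ X := not_not.2 .refl
      have htX : t ∈ X := ht
      have hsat : cut E X ≤ cut F X := cut_le_cut_of_count_le fun a ha₁ ha₂ => by
        by_contra hlt
        exact ha₂ ((not_not.1 ha₁).tail (Or.inl (not_le.1 hlt)))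
      have hnet := hF.cut_sub_cut_compl X
      rw [cut_compl_eq_zero fun a ha h₁ h₂ => absurd (h₂.tail (Or.inr ha)) h₁] at hnet
      simp only [hvX, htX, if_true, if_false] at hnet
      have := hcut X htX hvX
      omega
    obtain ⟨P, hv, ht, hnd, hch⟩ := exists_nodup_isChain_of_reflTransGen hreach
    exact_mod_cast hF.exists_succ_of_isChain hFE hv ht hnd hch

theorem hasDisjPaths_iff_forall_le_cut {n : ℕ} :
    HasDisjPaths E v t n ↔ ∀ X : Set V, t ∈ X → v ∉ X → n ≤ cut E X := by
  refine ⟨fun h X ht hv => h.le_cut ht hv, fun hcut => ?_⟩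
  obtain ⟨F, hFE, hF⟩ := exists_isFlow_of_forall_le_cut hcut n le_rfl
  exact (hasDisjPaths_of_isFlow hF).mono hFE

end Menger

section Uncrossing

theorem cut_union_add_cut_inter_le (E : Multiset (V × V)) (X Y : Set V) :
    cut E (X ∪ Y) + cut E (X ∩ Y) ≤ cut E X + cut E Y := by
  induction E using Multiset.induction_on with
  | empty => simp [cut]
  | cons a E ih =>
    simp only [cut_cons, Set.mem_union, Set.mem_inter_iff]
    by_cases h₁ : a.1 ∈ X <;> by_cases h₂ : a.1 ∈ Y <;> by_cases h₃ : a.2 ∈ X <;>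
      by_cases h₄ : a.2 ∈ Y <;> simp [h₁, h₂, h₃, h₄] <;> omega

theorem cut_sdiff_add_cut_sdiff_add_le (E : Multiset (V × V)) (X Y : Set V) :
    cut E (X \ Y) + cut E (Y \ X) + cut E (X ∩ Y) +
        E.countP (fun a => a.1 ∈ X ∧ a.1 ∈ Y ∧ a.2 ∉ X ∧ a.2 ∉ Y) ≤
      cut E X + cut E Y + cut E (X ∩ Y)ᶜ := by
  induction E using Multiset.induction_on with
  | empty => simp [cut]
  | cons a E ih =>
    simp only [cut_cons, Multiset.countP_cons, Set.mem_inter_iff, Set.mem_sdiff,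
      Set.mem_compl_iff]
    by_cases h₁ : a.1 ∈ X <;> by_cases h₂ : a.1 ∈ Y <;> by_cases h₃ : a.2 ∈ X <;>
      by_cases h₄ : a.2 ∈ Y <;> simp [h₁, h₂, h₃, h₄] <;> omega

theorem IsEulerian.cut_sdiff_add_cut_sdiff_lt [DecidableEq V] {E : Multiset (V × V)}
    (hE : IsEulerian E) {u s : V} (hus : (u, s) ∈ E) {X Y : Set V} (huX : u ∈ X) (huY : u ∈ Y)
    (hsX : s ∉ X) (hsY : s ∉ Y) :
    cut E (X \ Y) + cut E (Y \ X) < cut E X + cut E Y := by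
  have hle := cut_sdiff_add_cut_sdiff_add_le E X Y
  have hpos : 0 < E.countP (fun a => a.1 ∈ X ∧ a.1 ∈ Y ∧ a.2 ∉ X ∧ a.2 ∉ Y) :=
    Multiset.countP_pos.2 ⟨_, hus, huX, huY, hsX, hsY⟩
  rw [hE.cut_compl] at hle
  omega

def Separates (X : Set V) (a b : V) : Prop := a ∈ X ↔ b ∉ X

theorem Separates.compl {X : Set V} {a b : V} (h : Separates X a b) : Separates Xᶜ a b := by
  unfold Separates at *
  tauto

theorem Separates.inter_or_sdiff {X : Set V} {a b : V} (h : Separates X a b) (Y : Set V) :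
    (Separates (X ∩ Y) a b ∨ Separates (X \ Y) a b) ∧
      (Separates (X ∪ Y) a b ∨ Separates (Y \ X) a b) := by
  unfold Separates at *
  simp only [Set.mem_inter_iff, Set.mem_sdiff, Set.mem_union]
  tauto

def IsTight (E : Multiset (V × V)) (s : V) (X : Set V) : Prop :=
  s ∉ X ∧ ∃ a b, a ≠ s ∧ b ≠ s ∧ Separates X a b ∧ ∀ Z, Separates Z a b → cut E X ≤ cut E Z

variable [DecidableEq V] {E : Multiset (V × V)} {s u : V}

theorem isTight_of_forall_le_cut (hE : IsEulerian E) {v t : V} {n : ℕ} {Y : Set V}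
    (hv : v ≠ s) (ht : t ≠ s) (hsY : s ∉ Y) (hY : Separates Y v t)
    (hcut : ∀ X : Set V, t ∈ X → v ∉ X → n ≤ cut E X) (hYn : cut E Y ≤ n) : IsTight E s Y := by
  refine ⟨hsY, v, t, hv, ht, hY, fun Z hZ => hYn.trans ?_⟩
  by_cases htZ : t ∈ Z
  · exact hcut Z htZ (fun hvZ => hZ.1 hvZ htZ)
  · rw [← hE.cut_compl]
    exact hcut Zᶜ htZ (fun hvZ => hvZ (hZ.2 htZ))

theorem IsTight.union (hE : IsEulerian E) (hus : (u, s) ∈ E) {X Y : Set V} (hX : IsTight E s X)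
    (hY : IsTight E s Y) (huX : u ∈ X) (huY : u ∈ Y) : IsTight E s (X ∪ Y) := by
  obtain ⟨hsX, a, b, ha, hb, hXab, hXmin⟩ := hX
  obtain ⟨hsY, c, d, hc, hd, hYcd, hYmin⟩ := hY
  refine ⟨by simp [hsX, hsY], ?_⟩
  by_cases hab : Separates (X ∪ Y) a b ∧ cut E (X ∪ Y) ≤ cut E X
  · exact ⟨a, b, ha, hb, hab.1, fun Z hZ => hab.2.trans (hXmin Z hZ)⟩
  by_cases hcd : Separates (X ∪ Y) c d ∧ cut E (X ∪ Y) ≤ cut E Y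
  · exact ⟨c, d, hc, hd, hcd.1, fun Z hZ => hcd.2.trans (hYmin Z hZ)⟩
  -- Each of the pairs `(a, b)`, `(c, d)` is separated by two of the four uncrossed sets,
  -- which gives lower bounds contradicting sub- and posimodularity.
  exfalso
  have hsub := cut_union_add_cut_inter_le E X Y
  have hposi := hE.cut_sdiff_add_cut_sdiff_lt hus huX huY hsX hsY
  obtain ⟨hab₁, hab₂⟩ := hXab.inter_or_sdiff Y
  obtain ⟨hcd₁, hcd₂⟩ := hYcd.inter_or_sdiff X
  rw [Set.inter_comm] at hcd₁
  rw [Set.union_comm] at hcd₂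
  have h₁ := hab₁.imp (hXmin _) (hXmin _)
  have h₂ : cut E X < cut E (X ∪ Y) ∨ cut E X ≤ cut E (Y \ X) :=
    hab₂.imp (fun h => not_le.1 fun hle => hab ⟨h, hle⟩) (hXmin _)
  have h₃ := hcd₁.imp (hYmin _) (hYmin _)
  have h₄ : cut E Y < cut E (X ∪ Y) ∨ cut E Y ≤ cut E (X \ Y) :=
    hcd₂.imp (fun h => not_le.1 fun hle => hcd ⟨h, hle⟩) (hYmin _)
  omega

end Uncrossing

section SplittingOff

variable [DecidableEq V] {E : Multiset (V × V)} {s u : V}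

theorem cut_insert_add_outDeg_add_countP {T : Set V} (hsT : s ∉ T)
    (hT : ∀ a ∈ E, a.1 = s → a.2 ∈ T) :
    cut E (insert s T) + outDeg E s + E.countP (fun a => a.1 ∈ T ∧ a.2 = s) =
      cut E T + inDeg E s := by
  induction E using Multiset.induction_on with
  | empty => simp [cut, inDeg, outDeg]
  | cons a E ih =>
    have ha := hT a (Multiset.mem_cons_self _ _)
    have ih := ih fun b hb => hT b (Multiset.mem_cons_of_mem hb)
    simp only [cut_cons, inDeg, outDeg, Multiset.countP_cons, Set.mem_insert_iff] at ih ⊢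
    by_cases h₁ : a.1 = s <;> by_cases h₂ : a.2 = s <;> by_cases h₃ : a.1 ∈ T <;>
      by_cases h₄ : a.2 ∈ T <;> simp_all <;> omega

theorem exists_isTight_forall_mem (hE : IsEulerian E) (hus : (u, s) ∈ E) {X₀ : Set V}
    (hX₀ : IsTight E s X₀) (huX₀ : u ∈ X₀) (L : Finset V)
    (hL : ∀ w ∈ L, ∃ X, IsTight E s X ∧ u ∈ X ∧ w ∈ X) :
    ∃ T, IsTight E s T ∧ u ∈ T ∧ ∀ w ∈ L, w ∈ T := by
  induction L using Finset.induction_on with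
  | empty => exact ⟨X₀, hX₀, huX₀, by simp⟩
  | insert w L _ ih =>
    obtain ⟨T, hT, huT, hLT⟩ := ih fun w' hw' => hL w' (Finset.mem_insert_of_mem hw')
    obtain ⟨X, hX, huX, hwX⟩ := hL w (Finset.mem_insert_self w L)
    refine ⟨T ∪ X, hT.union hE hus hX huT huX, Or.inl huT, ?_⟩
    simp only [Finset.mem_insert, forall_eq_or_imp]
    exact ⟨Or.inr hwX, fun w' hw' => Or.inl (hLT w' hw')⟩

theorem exists_out_arc_forall_isTight_not_mem (hE : IsEulerian E) (hus : (u, s) ∈ E) :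
    ∃ w, (s, w) ∈ E ∧ ∀ X, IsTight E s X → u ∈ X → w ∉ X := by
  by_contra! hcon
  have hout : 0 < outDeg E s := hE s ▸ Multiset.countP_pos.2 ⟨_, hus, rfl⟩
  obtain ⟨a₀, ha₀, ha₀s⟩ := Multiset.countP_pos.1 hout
  obtain ⟨X₀, hX₀, huX₀, -⟩ := hcon a₀.2 (by rw [← ha₀s]; exact ha₀)
  obtain ⟨T, ⟨hsT, a, b, ha, hb, hab, hmin⟩, huT, hcov⟩ :=
    exists_isTight_forall_mem hE hus hX₀ huX₀ ((E.filter (·.1 = s)).map Prod.snd).toFinset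
      fun w hw => by
        obtain ⟨a, ha, rfl⟩ := Multiset.mem_map.1 (Multiset.mem_toFinset.1 hw)
        obtain ⟨haE, has⟩ := Multiset.mem_filter.1 ha
        exact hcon a.2 (by rw [← has]; exact haE)
  have hid := cut_insert_add_outDeg_add_countP hsT fun a ha has =>
    hcov a.2 (Multiset.mem_toFinset.2 (Multiset.mem_map_of_mem _ (Multiset.mem_filter.2 ⟨ha, has⟩)))
  have hpos : 0 < E.countP (fun a => a.1 ∈ T ∧ a.2 = s) :=
    Multiset.countP_pos.2 ⟨_, hus, huT, rfl⟩
  have hle := hmin (insert s T) (by simpa [Separates, ha, hb] using hab)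
  have := hE s
  omega

def splitOff (E : Multiset (V × V)) (u s w : V) : Multiset (V × V) :=
  (u, w) ::ₘ ((E.erase (u, s)).erase (s, w))

theorem cut_splitOff_add {w : V} (hus : (u, s) ∈ E) (hsw : (s, w) ∈ E) (X : Set V) :
    cut (splitOff E u s w) X + (if u ∉ X ∧ s ∈ X then 1 else 0) +
        (if s ∉ X ∧ w ∈ X then 1 else 0) =
      cut E X + if u ∉ X ∧ w ∈ X then 1 else 0 := by
  by_cases hsw' : (s, w) ∈ E.erase (u, s)
  · conv_rhs => rw [← Multiset.cons_erase hus, ← Multiset.cons_erase hsw']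
    simp only [splitOff, cut_cons]
    omega
  · -- only a loop `(s, s)` can be lost to the first erasure
    obtain ⟨rfl, rfl⟩ : s = u ∧ w = s := by
      by_contra h
      exact hsw' ((Multiset.mem_erase_of_ne (by grind)).2 hsw)
    conv_rhs => rw [← Multiset.cons_erase hus]
    simp [splitOff, cut_cons, Multiset.erase_of_notMem hsw']

theorem cut_splitOff_le {w : V} (hus : (u, s) ∈ E) (hsw : (s, w) ∈ E) (X : Set V) :
    cut (splitOff E u s w) X ≤ cut E X := by
  have := cut_splitOff_add hus hsw X
  by_cases hu : u ∈ X <;> by_cases hs : s ∈ X <;> by_cases hw : w ∈ X <;>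
    simp [hu, hs, hw] at this <;> omega

theorem cut_le_cut_splitOff_add_one {w : V} (hus : (u, s) ∈ E) (hsw : (s, w) ∈ E) (X : Set V) :
    cut E X ≤ cut (splitOff E u s w) X + 1 := by
  have := cut_splitOff_add hus hsw X
  by_cases hu : u ∈ X <;> by_cases hs : s ∈ X <;> by_cases hw : w ∈ X <;>
    simp [hu, hs, hw] at this <;> omega

theorem mem_and_mem_of_cut_splitOff_lt {w : V} (hus : (u, s) ∈ E) (hsw : (s, w) ∈ E)
    {X : Set V} (h : cut (splitOff E u s w) X < cut E X) :
    (u ∈ X ∧ w ∈ X ∧ s ∉ X) ∨ (u ∈ Xᶜ ∧ w ∈ Xᶜ ∧ s ∉ Xᶜ) := by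
  have := cut_splitOff_add hus hsw X
  by_cases hu : u ∈ X <;> by_cases hs : s ∈ X <;> by_cases hw : w ∈ X <;>
    simp [hu, hs, hw] at this ⊢ <;> omega

end SplittingOff

end FrankJackson

open FrankJackson

/-- (Directed splitting-off theorem of Frank and Jackson.)
Let `E` be the arc multiset of an Eulerian multidigraph on `N ∪ {s}` and `(u,s) ∈ E`.
Then there is an arc `(s,w) ∈ E` such that replacing the pair `(u,s), (s,w)` by a new
parallel copy of `(u,w)` preserves the arc-connectivity `λ(v,t)` for all `v, t ≠ s`
(expressed as: for every `n`, there are `n` arc-disjoint `v`-`t` paths before iff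
after). -/
theorem frank_jackson_splitting_off
    {V : Type*} [DecidableEq V]
    (E : Multiset (V × V)) (s u : V)
    (hEul : ∀ v : V, (E.filter fun a => a.2 = v).card = (E.filter fun a => a.1 = v).card)
    (hus : (u, s) ∈ E) :
    ∃ w : V, (s, w) ∈ E ∧
      ∀ v t : V, v ≠ s → t ≠ s → ∀ n : ℕ,
        HasDisjPaths E v t n ↔
          HasDisjPaths ((u, w) ::ₘ ((E.erase (u, s)).erase (s, w))) v t n := by
  have hE : IsEulerian E := fun y => by
    simpa only [inDeg, outDeg, Multiset.countP_eq_card_filter] using hEul y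
  obtain ⟨w, hsw, hw⟩ := exists_out_arc_forall_isTight_not_mem hE hus
  refine ⟨w, hsw, fun v t hv ht n => ?_⟩
  change _ ↔ HasDisjPaths (splitOff E u s w) v t n
  rw [hasDisjPaths_iff_forall_le_cut, hasDisjPaths_iff_forall_le_cut]
  refine ⟨fun h X htX hvX => ?_,
    fun h X htX hvX => (h X htX hvX).trans (cut_splitOff_le hus hsw X)⟩
  by_contra hlt
  have hlt' := (not_le.1 hlt).trans_le (h X htX hvX)
  have hle := cut_le_cut_splitOff_add_one hus hsw X
  have hX : Separates X v t := iff_of_false hvX (not_not.2 htX)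
  rcases mem_and_mem_of_cut_splitOff_lt hus hsw hlt' with ⟨huY, hwY, hsY⟩ | ⟨huY, hwY, hsY⟩
  · exact hw X (isTight_of_forall_le_cut hE hv ht hsY hX h (by omega)) huY hwY
  · exact hw Xᶜ (isTight_of_forall_le_cut hE hv ht hsY hX.compl h (by rw [hE.cut_compl]; omega))
      huY hwY
end

section
/- Let D=(N∪{s},E) be a multidigraph with a root r ∈ N such that every node other than r has in-degree at least its out-degree (an r-preflow digraph). Then by a sequence of operations, each either deleting an arc entering s or splitting off a pair of arcs (u,s),(s,w) into the arc (u,w), one can obtain an r-preflow multidigraph D'=(N,E') on node set N with λ_{D'}(r,v) = λ_D(r,v) for every v ∈ N. -/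
/-- One step at `s`: either delete an arc entering `s`, or split off a pair of arcs
`(u,s), (s,w)` into the arc `(u,w)`. -/
def SplitStep {V : Type*} [DecidableEq V] (s : V) (E E' : Multiset (V × V)) : Prop :=
  (∃ u, (u, s) ∈ E ∧ E' = E.erase (u, s)) ∨
  (∃ u w, (u, s) ∈ E ∧ (s, w) ∈ E ∧
    E' = (u, w) ::ₘ ((E.erase (u, s)).erase (s, w)))

namespace SplittingOff

open Multiset

section Counting

-- The decidability instances are implicit so that they unify with the classical ones inside
-- `inDeg` and `outDeg` instead of being synthesized anew.
variable {α : Type*} (M : Multiset α) {p₁ p₂ q₁ q₂ : α → Prop}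
  {_ : DecidablePred p₁} {_ : DecidablePred p₂} {_ : DecidablePred q₁} {_ : DecidablePred q₂}

theorem countP_add_countP_le
    (h : ∀ a ∈ M, (if p₁ a then 1 else 0) + (if p₂ a then 1 else 0) ≤
      (if q₁ a then 1 else 0) + (if q₂ a then 1 else 0)) :
    M.countP p₁ + M.countP p₂ ≤ M.countP q₁ + M.countP q₂ := by
  induction M using Multiset.induction_on with
  | empty => simp
  | cons a M ih =>
    have ha := h a (mem_cons_self a M)
    have hM := ih fun b hb => h b (mem_cons_of_mem hb)
    simp only [countP_cons]
    omega

theorem countP_add_countP_lt [DecidableEq α]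
    (h : ∀ a ∈ M, (if p₁ a then 1 else 0) + (if p₂ a then 1 else 0) ≤
      (if q₁ a then 1 else 0) + (if q₂ a then 1 else 0))
    {a : α} (ha : a ∈ M)
    (hlt : (if p₁ a then 1 else 0) + (if p₂ a then 1 else 0) <
      (if q₁ a then 1 else 0) + (if q₂ a then 1 else 0)) :
    M.countP p₁ + M.countP p₂ < M.countP q₁ + M.countP q₂ := by
  have hrest := countP_add_countP_le (M.erase a) fun b hb => h b (mem_of_mem_erase hb)
  rw [← cons_erase ha]
  simp only [countP_cons]
  omega

theorem eq_of_card_eq_of_count_eq [DecidableEq α] {X Y : Multiset α} (r : α)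
    (hcard : card X = card Y) (hcount : ∀ x ≠ r, count x X = count x Y) : X = Y := by
  have hne : X.filter (· ≠ r) = Y.filter (· ≠ r) := by
    ext x
    by_cases hx : x = r
    · simp [hx]
    · simp [hx, hcount x hx]
  ext x
  by_cases hx : x = r
  · subst hx
    have hX := card_eq_countP_add_countP (· ≠ x) X
    have hY := card_eq_countP_add_countP (· ≠ x) Y
    simp only [countP_eq_card_filter, hne, not_not] at hX hY
    rw [count_eq_card_filter_eq, count_eq_card_filter_eq]
    simp only [eq_comm (a := x)] at hX hY ⊢
    omega
  · exact hcount x hx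

end Counting

variable {V : Type*}

section Flows

def arcs (P : List V) : Multiset (V × V) := P.zip P.tail

def IsEulerian (M : Multiset (V × V)) : Prop := M.map Prod.fst = M.map Prod.snd

-- A flow of value `k` from `r` to `v`: at every vertex `x`, in-degree plus `k • [x = r]` equals
-- out-degree plus `k • [x = v]`.
def IsFlow (F : Multiset (V × V)) (r v : V) (k : ℕ) : Prop :=
  F.map Prod.snd + replicate k r = F.map Prod.fst + replicate k v


theorem IsEulerian.of_cons_self {M : Multiset (V × V)} {x : V}
    (h : IsEulerian ((x, x) ::ₘ M)) : IsEulerian M := by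
  rw [IsEulerian, map_cons, map_cons] at h
  exact (cons_inj_right _).mp h

theorem IsEulerian.exists_arc_out_of_arc_in {M : Multiset (V × V)} {u s : V} (hM : IsEulerian M)
    (hus : (u, s) ∈ M) :
    ∃ w, (s, w) ∈ M := by
  have hout : s ∈ M.map Prod.fst := hM ▸ mem_map_of_mem Prod.snd hus
  obtain ⟨⟨a, w⟩, hsw, rfl⟩ := mem_map.mp hout
  exact ⟨w, hsw⟩

theorem arcs_cons_cons (a b : V) (P : List V) : arcs (a :: b :: P) = (a, b) ::ₘ arcs (b :: P) :=
  rfl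

theorem arcs_append_singleton {P : List V} {x : V} (y : V) (hx : P.getLast? = some x) :
    arcs (P ++ [y]) = (x, y) ::ₘ arcs P := by
  induction P with
  | nil => simp at hx
  | cons c Q ih =>
    cases Q with
    | nil =>
      obtain rfl : c = x := by simpa using hx
      rfl
    | cons d R =>
      rw [List.cons_append, List.cons_append, arcs_cons_cons, ← List.cons_append,
        ih (by simpa using hx), arcs_cons_cons, cons_swap]

theorem IsFlow.add {F G : Multiset (V × V)} {r v : V} {k l : ℕ} (hF : IsFlow F r v k)
    (hG : IsFlow G r v l) : IsFlow (F + G) r v (k + l) := by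
  unfold IsFlow at *
  rw [map_add, map_add, replicate_add, replicate_add, add_add_add_comm, hF, hG,
    add_add_add_comm]

theorem IsFlow.of_add {F G : Multiset (V × V)} {r v : V} {k l : ℕ}
    (h : IsFlow (F + G) r v (k + l)) (hG : IsFlow G r v l) : IsFlow F r v k := by
  unfold IsFlow at *
  rw [map_add, map_add, replicate_add, replicate_add, add_add_add_comm, hG,
    add_add_add_comm (map Prod.fst F)] at h
  exact add_right_cancel h

theorem isFlow_arcs : ∀ {P : List V} {a b : V}, P.head? = some a → P.getLast? = some b →
    IsFlow (arcs P) a b 1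
  | [], _, _, ha, _ => by simp at ha
  | [c], a, b, ha, hb => by
    obtain rfl : c = a := by simpa using ha
    obtain rfl : c = b := by simpa using hb
    rfl
  | c :: d :: Q, a, b, ha, hb => by
    obtain rfl : c = a := by simpa using ha
    have ih : IsFlow (arcs (d :: Q)) d b 1 := isFlow_arcs rfl (by simpa using hb)
    unfold IsFlow at ih ⊢
    rw [arcs_cons_cons, map_cons, map_cons]
    simp only [replicate_one, ← singleton_add] at ih ⊢
    rw [add_assoc {c} (map Prod.fst _), ← ih]
    abel

theorem IsFlow.add_of_add_swap {G Q₁ Q₂ : Multiset (V × V)} {r v : V} {k : ℕ}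
    (hF : IsFlow (G + Q₂.map Prod.swap) r v k) (hQ : IsFlow (Q₁ + Q₂) r v 1) :
    IsFlow (G + Q₁) r v (k + 1) := by
  classical
  have hfst : (Q₂.map Prod.swap).map Prod.fst = Q₂.map Prod.snd := by rw [map_map]; rfl
  have hsnd : (Q₂.map Prod.swap).map Prod.snd = Q₂.map Prod.fst := by rw [map_map]; rfl
  unfold IsFlow at *
  rw [map_add, map_add, hfst, hsnd] at hF
  ext x
  have h₁ := congrArg (count x) hF
  have h₂ := congrArg (count x) hQ
  simp only [map_add, count_add, count_replicate] at h₁ h₂ ⊢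
  split_ifs at * <;> omega

end Flows

section Cuts

open Classical

-- Cuts are arbitrary vertex sets, so complements exist without fixing a finite vertex set.
noncomputable def inDeg (M : Multiset (V × V)) (T : Set V) : ℕ :=
  M.countP fun a => a.1 ∉ T ∧ a.2 ∈ T

noncomputable def outDeg (M : Multiset (V × V)) (T : Set V) : ℕ :=
  M.countP fun a => a.1 ∈ T ∧ a.2 ∉ T

-- `λ(r, v)`; note `minCut M r r = sInf ∅ = 0`.
noncomputable def minCut (M : Multiset (V × V)) (r v : V) : ℕ :=
  sInf {k | ∃ T : Set V, v ∈ T ∧ r ∉ T ∧ inDeg M T = k}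

variable {M N : Multiset (V × V)} {T : Set V} {r v : V}

theorem inDeg_add (M N : Multiset (V × V)) (T : Set V) :
    inDeg (M + N) T = inDeg M T + inDeg N T :=
  countP_add _ _ _

theorem inDeg_cons (a : V × V) (M : Multiset (V × V)) (T : Set V) :
    inDeg (a ::ₘ M) T = inDeg M T + if a.1 ∉ T ∧ a.2 ∈ T then 1 else 0 :=
  countP_cons _ _ _

theorem inDeg_cons_self (x : V) (M : Multiset (V × V)) (T : Set V) :
    inDeg ((x, x) ::ₘ M) T = inDeg M T := by
  simp [inDeg_cons]

theorem inDeg_eq_zero : inDeg M T = 0 ↔ ∀ a ∈ M, ¬(a.1 ∉ T ∧ a.2 ∈ T) :=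
  countP_eq_zero

theorem outDeg_eq_zero : outDeg M T = 0 ↔ ∀ a ∈ M, ¬(a.1 ∈ T ∧ a.2 ∉ T) :=
  countP_eq_zero

theorem inDeg_mono (h : M ≤ N) (T : Set V) : inDeg M T ≤ inDeg N T :=
  countP_le_of_le _ h

theorem inDeg_compl (M : Multiset (V × V)) (T : Set V) : inDeg M Tᶜ = outDeg M T := by
  unfold inDeg outDeg
  congr! 2 with a
  simp

theorem inDeg_add_countP_fst_mem (M : Multiset (V × V)) (T : Set V) :
    inDeg M T + M.countP (·.1 ∈ T) = outDeg M T + M.countP (·.2 ∈ T) := by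
  unfold inDeg outDeg
  induction M using Multiset.induction_on with
  | empty => simp
  | cons a M ih =>
    simp only [countP_cons]
    by_cases h₁ : a.1 ∈ T <;> by_cases h₂ : a.2 ∈ T <;> simp [h₁, h₂] <;> omega

theorem IsFlow.inDeg_eq {F : Multiset (V × V)} {k : ℕ} (hF : IsFlow F r v k) (hv : v ∈ T)
    (hr : r ∉ T) : inDeg F T = outDeg F T + k := by
  have h := congrArg (countP (· ∈ T)) hF
  have hr' : (replicate k r).countP (· ∈ T) = 0 :=
    countP_eq_zero.mpr fun a ha => (eq_of_mem_replicate ha) ▸ hr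
  have hv' : (replicate k v).countP (· ∈ T) = k :=
    (countP_eq_card.mpr fun a ha => (eq_of_mem_replicate ha) ▸ hv).trans (card_replicate k v)
  rw [countP_add, countP_add, countP_map, countP_map, ← countP_eq_card_filter,
    ← countP_eq_card_filter, hr', hv'] at h
  have := inDeg_add_countP_fst_mem F T
  omega

theorem IsEulerian.outDeg_eq_inDeg (hM : IsEulerian M) (T : Set V) : outDeg M T = inDeg M T := by
  have h := congrArg (countP (· ∈ T)) hM
  rw [countP_map, countP_map, ← countP_eq_card_filter, ← countP_eq_card_filter] at h
  have := inDeg_add_countP_fst_mem M T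
  omega

theorem minCut_le (hv : v ∈ T) (hr : r ∉ T) : minCut M r v ≤ inDeg M T :=
  Nat.sInf_le ⟨T, hv, hr, rfl⟩

theorem exists_inDeg_eq_minCut (M : Multiset (V × V)) (hv : v ≠ r) :
    ∃ T : Set V, v ∈ T ∧ r ∉ T ∧ inDeg M T = minCut M r v :=
  Nat.sInf_mem (s := {k | ∃ T : Set V, v ∈ T ∧ r ∉ T ∧ inDeg M T = k})
    ⟨_, {v}, rfl, fun h => hv (Set.mem_singleton_iff.mp h).symm, rfl⟩

theorem minCut_congr (h : ∀ T : Set V, r ∉ T → inDeg M T = inDeg N T) :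
    minCut M r v = minCut N r v := by
  unfold minCut
  congr 1
  ext k
  constructor <;> rintro ⟨T, hv, hr, rfl⟩
  exacts [⟨T, hv, hr, (h T hr).symm⟩, ⟨T, hv, hr, h T hr⟩]

theorem IsEulerian.minCut_le_inDeg (hM : IsEulerian M) {x : V} (hx : x ∈ T ↔ r ∉ T) :
    minCut M r x ≤ inDeg M T := by
  by_cases hxT : x ∈ T
  · exact minCut_le hxT (hx.mp hxT)
  · calc minCut M r x ≤ inDeg M Tᶜ := minCut_le hxT (by simpa using not_not.mp (mt hx.mpr hxT))
      _ = inDeg M T := by rw [inDeg_compl, hM.outDeg_eq_inDeg]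

theorem inDeg_union_add_inter_le (M : Multiset (V × V)) (C C' : Set V) :
    inDeg M (C ∪ C') + inDeg M (C ∩ C') ≤ inDeg M C + inDeg M C' :=
  countP_add_countP_le M fun a _ => by
    by_cases a.1 ∈ C <;> by_cases a.1 ∈ C' <;> by_cases a.2 ∈ C <;> by_cases a.2 ∈ C' <;>
      simp [*]

theorem IsEulerian.inDeg_diff_add_inDeg_diff_lt (hM : IsEulerian M) {C C' : Set V} {u s : V}
    (hus : (u, s) ∈ M) (huC : u ∈ C) (huC' : u ∈ C') (hsC : s ∉ C) (hsC' : s ∉ C') :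
    inDeg M (C \ C') + inDeg M (C' \ C) < inDeg M C + inDeg M C' := by
  rw [← hM.outDeg_eq_inDeg (C' \ C), ← hM.outDeg_eq_inDeg C']
  refine countP_add_countP_lt M (fun a _ => ?_) hus (by simp [*])
  by_cases a.1 ∈ C <;> by_cases a.1 ∈ C' <;> by_cases a.2 ∈ C <;> by_cases a.2 ∈ C' <;>
    simp [*]

theorem minCut_add_of_forall_snd_eq {E A : Multiset (V × V)} (hA : ∀ a ∈ A, a.2 = r) (v : V) :
    minCut (E + A) r v = minCut E r v :=
  minCut_congr fun _ hrT => by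
    rw [inDeg_add, inDeg_eq_zero.mpr fun a ha h => hrT (hA a ha ▸ h.2), add_zero]

-- `C` separates `r` and `x`, in either direction, and attains `λ(r, x)`.
def IsTight (M : Multiset (V × V)) (r x : V) (C : Set V) : Prop :=
  (x ∈ C ↔ r ∉ C) ∧ inDeg M C = minCut M r x

theorem separates_union_inter_or_diff_diff {C C' : Set V} {x x' : V} (hx : x ∈ C ↔ r ∉ C)
    (hx' : x' ∈ C' ↔ r ∉ C') :
    ((x ∈ C ∪ C' ↔ r ∉ C ∪ C') ∧ (x' ∈ C ∩ C' ↔ r ∉ C ∩ C')) ∨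
      ((x' ∈ C ∪ C' ↔ r ∉ C ∪ C') ∧ (x ∈ C ∩ C' ↔ r ∉ C ∩ C')) ∨
      ((x ∈ C \ C' ↔ r ∉ C \ C') ∧ (x' ∈ C' \ C ↔ r ∉ C' \ C)) ∨
      ((x' ∈ C \ C' ↔ r ∉ C \ C') ∧ (x ∈ C' \ C ↔ r ∉ C' \ C)) := by
  simp only [Set.mem_union, Set.mem_inter_iff, Set.mem_sdiff]
  by_cases x ∈ C <;> by_cases x ∈ C' <;> by_cases x' ∈ C <;> by_cases x' ∈ C' <;>
    by_cases r ∈ C <;> by_cases r ∈ C' <;> simp_all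

theorem IsTight.union (hM : IsEulerian M) {C C' : Set V} {u s x x' : V} (hus : (u, s) ∈ M)
    (huC : u ∈ C) (huC' : u ∈ C') (hsC : s ∉ C) (hsC' : s ∉ C') (hC : IsTight M r x C)
    (hC' : IsTight M r x' C') : IsTight M r x (C ∪ C') ∨ IsTight M r x' (C ∪ C') := by
  have hsub := inDeg_union_add_inter_le M C C'
  have hpos := hM.inDeg_diff_add_inDeg_diff_lt hus huC huC' hsC hsC'
  obtain ⟨hxC, htight⟩ := hC
  obtain ⟨hxC', htight'⟩ := hC'
  have key := separates_union_inter_or_diff_diff hxC hxC'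
  rcases key with ⟨hU, hI⟩ | ⟨hU, hI⟩ | ⟨h₁, h₂⟩ | ⟨h₁, h₂⟩
  · have := hM.minCut_le_inDeg hU
    have := hM.minCut_le_inDeg hI
    exact Or.inl ⟨hU, by omega⟩
  · have := hM.minCut_le_inDeg hU
    have := hM.minCut_le_inDeg hI
    exact Or.inr ⟨hU, by omega⟩
  all_goals
    have := hM.minCut_le_inDeg h₁
    have := hM.minCut_le_inDeg h₂
    omega

theorem exists_isTight_superset (hM : IsEulerian M) {u s : V} (hus : (u, s) ∈ M) {W : Finset V}
    (hW : W.Nonempty)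
    (h : ∀ w ∈ W, ∃ (C : Set V) (x : V), x ≠ s ∧ s ∉ C ∧ u ∈ C ∧ w ∈ C ∧ IsTight M r x C) :
    ∃ (C : Set V) (x : V), x ≠ s ∧ s ∉ C ∧ u ∈ C ∧ ↑W ⊆ C ∧ IsTight M r x C := by
  induction hW using Finset.Nonempty.cons_induction with
  | singleton w =>
    obtain ⟨C, x, hxs, hsC, huC, hwC, hC⟩ := h w (Finset.mem_singleton_self w)
    exact ⟨C, x, hxs, hsC, huC, by simpa using hwC, hC⟩
  | cons w W hwW hW ih =>
    obtain ⟨C, x, hxs, hsC, huC, hwC, hC⟩ := h w (Finset.mem_cons_self w W)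
    obtain ⟨C', x', hxs', hsC', huC', hWC', hC'⟩ :=
      ih fun w' hw' => h w' (Finset.mem_cons_of_mem hw')
    have hsub : ↑(W.cons w hwW) ⊆ C ∪ C' := by
      rw [Finset.coe_cons]
      exact Set.insert_subset (Or.inl hwC) (hWC'.trans Set.subset_union_right)
    have hsU : s ∉ C ∪ C' := fun h => h.elim hsC hsC'
    rcases hC.union hM hus huC huC' hsC hsC' hC' with hU | hU
    · exact ⟨C ∪ C', x, hxs, hsU, Or.inl huC, hsub, hU⟩
    · exact ⟨C ∪ C', x', hxs', hsU, Or.inl huC, hsub, hU⟩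

end Cuts

section Paths

variable [DecidableEq V]

def IsPreflow (M : Multiset (V × V)) (r : V) : Prop :=
  ∀ v ≠ r, (M.map Prod.fst).count v ≤ (M.map Prod.snd).count v

theorem IsFlow.isPreflow {F : Multiset (V × V)} {r v : V} {k : ℕ} (hF : IsFlow F r v k) :
    IsPreflow F r := by
  intro x hx
  have := congrArg (count x) hF
  simp only [count_add, count_replicate, if_neg (Ne.symm hx)] at this
  omega

theorem IsFlow.count_fst_add {F : Multiset (V × V)} {r v : V} {k : ℕ} (hF : IsFlow F r v k)
    (hv : v ≠ r) : (F.map Prod.fst).count v + k = (F.map Prod.snd).count v := by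
  have := congrArg (count v) hF
  simp only [count_add, count_replicate, if_neg (Ne.symm hv), ↓reduceIte] at this
  omega

theorem IsPreflow.of_cons {F : Multiset (V × V)} {r x t : V}
    (hF : IsPreflow ((x, t) ::ₘ F) r)
    (hdef : (((x, t) ::ₘ F).map Prod.fst).count t < (((x, t) ::ₘ F).map Prod.snd).count t) :
    IsPreflow F r ∧ (x ≠ r → (F.map Prod.fst).count x < (F.map Prod.snd).count x) := by
  simp only [IsPreflow, map_cons, count_cons] at hF hdef ⊢
  refine ⟨fun y hy => ?_, fun hx => ?_⟩
  · have := hF y hy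
    by_cases hyt : y = t
    · subst hyt
      split_ifs at this hdef <;> omega
    · rw [if_neg hyt] at this
      split_ifs at this <;> omega
  · have := hF x hx
    by_cases hxt : x = t
    · subst hxt
      simp only [↓reduceIte] at hdef
      omega
    · simp only [↓reduceIte, hxt] at this
      omega

theorem IsPreflow.exists_path {F : Multiset (V × V)} {r : V} (hF : IsPreflow F r) {t : V}
    (ht : t ≠ r) (hdef : (F.map Prod.fst).count t < (F.map Prod.snd).count t) :
    ∃ P : List V, P.head? = some r ∧ P.getLast? = some t ∧ arcs P ≤ F := by
  induction F using Multiset.strongInductionOn generalizing t with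
  | ih F ih =>
  obtain ⟨x, hxt⟩ : ∃ x, (x, t) ∈ F := by
    obtain ⟨⟨x, t'⟩, h, rfl⟩ := mem_map.mp (count_pos.mp (Nat.zero_lt_of_lt hdef))
    exact ⟨x, h⟩
  by_cases hx : x = r
  · subst hx
    exact ⟨[x, t], rfl, rfl, singleton_le.mpr hxt⟩
  rw [← cons_erase hxt] at hF hdef
  obtain ⟨hF₁, hdef₁⟩ := hF.of_cons hdef
  obtain ⟨P, hPr, hPx, hPF⟩ := ih _ (erase_lt.mpr hxt) hF₁ hx (hdef₁ hx)
  refine ⟨P ++ [t], ?_, by simp, ?_⟩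
  · cases P <;> simp_all
  · rw [arcs_append_singleton t hPx, ← cons_erase hxt]
    exact cons_le_cons _ hPF

theorem IsFlow.hasDisjPaths {r v : V} (hv : v ≠ r) :
    ∀ {k : ℕ} {F : Multiset (V × V)}, IsFlow F r v k → HasDisjPaths F r v k
  | 0, _, _ => ⟨[], rfl, by simp, by simp⟩
  | k + 1, F, hF => by
    obtain ⟨P, hPr, hPv, hPF⟩ :=
      hF.isPreflow.exists_path hv (by have := hF.count_fst_add hv; omega)
    have hrest : F - arcs P + arcs P = F := tsub_add_cancel_of_le hPF
    obtain ⟨Ps, hlen, hends, hsum⟩ :=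
      (IsFlow.of_add (hrest ▸ hF) (isFlow_arcs hPr hPv)).hasDisjPaths hv
    refine ⟨P :: Ps, by simp [hlen], ?_, ?_⟩
    · simpa [hPr, hPv] using hends
    · rw [List.map_cons, List.sum_cons, ← hrest, add_comm (F - arcs P)]
      exact add_le_add_right hsum _

theorem HasDisjPaths.exists_isFlow {M : Multiset (V × V)} {r v : V} {n : ℕ}
    (h : HasDisjPaths M r v n) : ∃ F ≤ M, IsFlow F r v n := by
  obtain ⟨Ps, rfl, hends, hle⟩ := h
  refine ⟨_, hle, ?_⟩
  clear hle
  induction Ps with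
  | nil => simp [IsFlow]
  | cons P Ps ih =>
    rw [List.map_cons, List.sum_cons, List.length_cons, add_comm Ps.length]
    exact (isFlow_arcs (hends P (by simp)).1 (hends P (by simp)).2).add
      (ih fun Q hQ => hends Q (by simp [hQ]))

theorem hasDisjPaths_iff_exists_isFlow {M : Multiset (V × V)} {r v : V} (hv : v ≠ r) (n : ℕ) :
    HasDisjPaths M r v n ↔ ∃ F ≤ M, IsFlow F r v n :=
  ⟨HasDisjPaths.exists_isFlow, fun ⟨_, hFM, hF⟩ =>
    have ⟨Ps, hlen, hends, hle⟩ := hF.hasDisjPaths hv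
    ⟨Ps, hlen, hends, hle.trans hFM⟩⟩

theorem exists_reflTransGen_filter_of_reflTransGen {R : Multiset (V × V)} {a b : V}
    (h : Relation.ReflTransGen (fun x y => (x, y) ∈ R) a b) (hab : a ≠ b) :
    ∃ c, (a, c) ∈ R ∧
      Relation.ReflTransGen (fun x y => (x, y) ∈ R.filter fun e => e.1 ≠ a ∧ e.2 ≠ a) c b := by
  induction h with
  | refl => exact absurd rfl hab
  | @tail x y _ hxy ih =>
    by_cases hxa : x = a
    · subst hxa
      exact ⟨y, hxy, .refl⟩
    · obtain ⟨c, hac, hcx⟩ := ih (Ne.symm hxa)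
      exact ⟨c, hac, hcx.tail (mem_filter.mpr ⟨hxy, hxa, Ne.symm hab⟩)⟩

theorem exists_path_of_reflTransGen {R : Multiset (V × V)} {a b : V}
    (h : Relation.ReflTransGen (fun x y => (x, y) ∈ R) a b) :
    ∃ P : List V, P.head? = some a ∧ P.getLast? = some b ∧ arcs P ≤ R := by
  induction R using Multiset.strongInductionOn generalizing a with
  | ih R ih =>
  by_cases hab : a = b
  · exact ⟨[a], rfl, by simp [hab], by simp [arcs]⟩
  obtain ⟨c, hac, hcb⟩ := exists_reflTransGen_filter_of_reflTransGen h hab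
  set p : V × V → Prop := fun e => e.1 ≠ a ∧ e.2 ≠ a
  have hacp : (a, c) ∈ R.filter fun e => ¬p e := mem_filter.mpr ⟨hac, by simp [p]⟩
  have hlt : R.filter p < R :=
    lt_of_le_of_ne (filter_le _ _) fun heq => by
      rw [← heq] at hac
      simp [p] at hac
  obtain ⟨P, hPc, hPb, hPR⟩ := ih _ hlt hcb
  obtain ⟨Q, rfl⟩ : ∃ Q, P = c :: Q := by
    cases P <;> simp_all
  refine ⟨a :: c :: Q, rfl, by simpa using hPb, ?_⟩
  rw [arcs_cons_cons, ← singleton_add, ← filter_add_not p R, add_comm (R.filter p)]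
  exact add_le_add (singleton_le.mpr hacp) hPR

theorem IsFlow.augment {M F Q : Multiset (V × V)} {r v : V} {k : ℕ} (hFM : F ≤ M)
    (hF : IsFlow F r v k) (hQR : Q ≤ (M - F) + F.map Prod.swap) (hQ : IsFlow Q r v 1) :
    ∃ F' ≤ M, IsFlow F' r v (k + 1) := by
  set Q₁ := Q ∩ (M - F)
  set Q₂ := Q - Q₁
  have hQ₂ : Q₂.map Prod.swap ≤ F := by
    have : Q₂ ≤ F.map Prod.swap := by
      rw [le_iff_count] at hQR ⊢
      intro x
      have := hQR x
      simp only [Q₂, Q₁, count_sub, count_inter, count_add] at this ⊢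
      omega
    simpa [map_map, Function.comp_def] using map_le_map (f := Prod.swap) this
  refine ⟨F - Q₂.map Prod.swap + Q₁, ?_, IsFlow.add_of_add_swap (Q₂ := Q₂) ?_ ?_⟩
  · calc F - Q₂.map Prod.swap + Q₁ ≤ F + (M - F) := add_le_add tsub_le_self inter_le_right
      _ = M := add_tsub_cancel_of_le hFM
  · rwa [tsub_add_cancel_of_le hQ₂]
  · rwa [add_tsub_cancel_of_le inter_le_left]

theorem IsFlow.augment_or_cut {M F : Multiset (V × V)} {r v : V} {k : ℕ} (hFM : F ≤ M)
    (hF : IsFlow F r v k) :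
    (∃ F' ≤ M, IsFlow F' r v (k + 1)) ∨ ∃ T : Set V, v ∈ T ∧ r ∉ T ∧ inDeg M T ≤ k := by
  -- the residual multigraph: unused arcs of `M` forwards, arcs of `F` backwards
  set R := (M - F) + F.map Prod.swap
  by_cases hreach : Relation.ReflTransGen (fun x y => (x, y) ∈ R) r v
  · obtain ⟨P, hPr, hPv, hPR⟩ := exists_path_of_reflTransGen hreach
    exact Or.inl (hF.augment hFM hPR (isFlow_arcs hPr hPv))
  right
  set T := {x | ¬Relation.ReflTransGen (fun x y => (x, y) ∈ R) r x}
  refine ⟨T, hreach, not_not.mpr .refl, ?_⟩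
  have hres : inDeg (M - F) T = 0 :=
    inDeg_eq_zero.mpr fun a ha ⟨ha₁, ha₂⟩ =>
      ha₂ ((not_not.mp ha₁).tail (mem_add.mpr (Or.inl ha)))
  have hback : outDeg F T = 0 :=
    outDeg_eq_zero.mpr fun a ha ⟨ha₁, ha₂⟩ =>
      ha₁ ((not_not.mp ha₂).tail (mem_add.mpr (Or.inr (mem_map_of_mem Prod.swap ha))))
  rw [← tsub_add_cancel_of_le hFM, inDeg_add, hres, hF.inDeg_eq hreach (not_not.mpr .refl),
    hback]
  omega

theorem hasDisjPaths_iff_le_minCut {M : Multiset (V × V)} {r v : V} (hv : v ≠ r) (n : ℕ) :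
    HasDisjPaths M r v n ↔ n ≤ minCut M r v := by
  rw [hasDisjPaths_iff_exists_isFlow hv]
  constructor
  · rintro ⟨F, hFM, hF⟩
    obtain ⟨T, hvT, hrT, hT⟩ := exists_inDeg_eq_minCut M hv
    calc n ≤ inDeg F T := by rw [hF.inDeg_eq hvT hrT]; omega
      _ ≤ inDeg M T := inDeg_mono hFM T
      _ = minCut M r v := hT
  · intro hn
    suffices ∀ k ≤ n, ∃ F ≤ M, IsFlow F r v k from this n le_rfl
    intro k
    induction k with
    | zero => exact fun _ => ⟨0, zero_le _, by simp [IsFlow]⟩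
    | succ k ih =>
      intro hk
      obtain ⟨F, hFM, hF⟩ := ih (by omega)
      refine (hF.augment_or_cut hFM).resolve_right ?_
      rintro ⟨T, hvT, hrT, hT⟩
      have := minCut_le (M := M) hvT hrT
      omega

end Paths

section Splitting

variable [DecidableEq V] {M : Multiset (V × V)} {r u s w : V}

def splitOff (M : Multiset (V × V)) (u s w : V) : Multiset (V × V) :=
  (u, w) ::ₘ (M.erase (u, s)).erase (s, w)

theorem exists_eq_cons_cons_of_splitOff (hus : (u, s) ∈ M) (hsw : (s, w) ∈ M) (hu : u ≠ s) :
    ∃ M₀, M = (u, s) ::ₘ (s, w) ::ₘ M₀ ∧ splitOff M u s w = (u, w) ::ₘ M₀ := by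
  have hsw' : (s, w) ∈ M.erase (u, s) :=
    (mem_erase_of_ne fun h => hu (Prod.ext_iff.mp h).1.symm).mpr hsw
  exact ⟨_, by rw [cons_erase hsw', cons_erase hus], rfl⟩

theorem isEulerian_splitOff (hM : IsEulerian M) (hus : (u, s) ∈ M) (hsw : (s, w) ∈ M)
    (hu : u ≠ s) : IsEulerian (splitOff M u s w) := by
  obtain ⟨M₀, rfl, h⟩ := exists_eq_cons_cons_of_splitOff hus hsw hu
  unfold IsEulerian at *
  simp only [h, map_cons] at hM ⊢
  rw [cons_swap] at hM
  exact (cons_inj_right _).mp hM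

theorem count_snd_splitOff (hus : (u, s) ∈ M) (hsw : (s, w) ∈ M) (hu : u ≠ s) :
    ((splitOff M u s w).map Prod.snd).count s + 1 = (M.map Prod.snd).count s := by
  obtain ⟨M₀, rfl, h⟩ := exists_eq_cons_cons_of_splitOff hus hsw hu
  simp [h, count_cons]

open Classical in
theorem inDeg_splitOff (hus : (u, s) ∈ M) (hsw : (s, w) ∈ M) (hu : u ≠ s) (T : Set V) :
    inDeg M T =
      inDeg (splitOff M u s w) T + if (u ∈ T ↔ w ∈ T) ∧ (u ∈ T ↔ s ∉ T) then 1 else 0 := by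
  obtain ⟨M₀, rfl, h⟩ := exists_eq_cons_cons_of_splitOff hus hsw hu
  rw [h, inDeg_cons, inDeg_cons, inDeg_cons]
  by_cases u ∈ T <;> by_cases s ∈ T <;> by_cases w ∈ T <;> simp [*]

theorem minCut_splitOff_le (hus : (u, s) ∈ M) (hsw : (s, w) ∈ M) (hu : u ≠ s) {v : V}
    (hv : v ≠ r) : minCut (splitOff M u s w) r v ≤ minCut M r v := by
  obtain ⟨T, hvT, hrT, hT⟩ := exists_inDeg_eq_minCut M hv
  have := inDeg_splitOff hus hsw hu T
  have := minCut_le (M := splitOff M u s w) hvT hrT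
  split_ifs at * <;> omega

theorem exists_isTight_of_inDeg_splitOff_lt (hM : IsEulerian M) (hus : (u, s) ∈ M)
    (hsw : (s, w) ∈ M) (hu : u ≠ s) {v : V} {T : Set V} (hvT : v ∈ T) (hrT : r ∉ T)
    (hlt : inDeg (splitOff M u s w) T < minCut M r v) :
    ∃ C : Set V, s ∉ C ∧ u ∈ C ∧ w ∈ C ∧ IsTight M r v C := by
  have h := inDeg_splitOff hus hsw hu T
  have hle := minCut_le (M := M) hvT hrT
  split_ifs at h with hpat
  · obtain ⟨huw, hus'⟩ := hpat
    by_cases huT : u ∈ T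
    · exact ⟨T, hus'.mp huT, huT, huw.mp huT, by simp [hvT, hrT], by omega⟩
    · refine ⟨Tᶜ, by simpa using not_not.mp (mt hus'.mpr huT), huT, mt huw.mpr huT,
        by simp [hvT, hrT], ?_⟩
      rw [inDeg_compl, hM.outDeg_eq_inDeg]
      omega
  · omega

theorem IsEulerian.inDeg_insert_lt (hM : IsEulerian M) (hss : (s, s) ∉ M) (hus : (u, s) ∈ M)
    {C : Set V} (huC : u ∈ C) (hsC : s ∉ C) (hout : ∀ w, (s, w) ∈ M → w ∈ C) :
    inDeg M (insert s C) < inDeg M C := by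
  have hu : u ≠ s := fun h => hss (h ▸ hus)
  have key : inDeg M (insert s C) + M.countP (fun a => s = a.1) <
      inDeg M C + M.countP (fun a => s = a.2) := by
    unfold inDeg
    refine countP_add_countP_lt M (fun ⟨a, b⟩ hab => ?_) hus (by simp [huC, hsC, Ne.symm hu])
    by_cases has : a = s
    · subst has
      have hbs : b ≠ a := fun h => hss (h ▸ hab)
      simp [hout b hab, hbs, hsC]
    · by_cases b = s <;> by_cases a ∈ C <;> by_cases b ∈ C <;> simp_all [eq_comm]
  rw [countP_eq_card_filter, countP_eq_card_filter, ← count_map, ← count_map, hM] at key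
  omega

theorem exists_finset_mem_iff (M : Multiset (V × V)) (s : V) :
    ∃ W : Finset V, ∀ w, w ∈ W ↔ (s, w) ∈ M := by
  refine ⟨((M.filter (·.1 = s)).map Prod.snd).toFinset, fun w => ?_⟩
  simp only [mem_toFinset, mem_map, mem_filter]
  constructor
  · rintro ⟨⟨a, b⟩, ⟨hab, rfl⟩, rfl⟩
    exact hab
  · exact fun h => ⟨(s, w), ⟨h, rfl⟩, rfl⟩

theorem IsEulerian.exists_splitOff (hM : IsEulerian M) (hrs : r ≠ s) (hus : (u, s) ∈ M)
    (hss : (s, s) ∉ M) :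
    ∃ w, (s, w) ∈ M ∧ ∀ v, v ≠ r → v ≠ s → minCut (splitOff M u s w) r v = minCut M r v := by
  have hu : u ≠ s := fun h => hss (h ▸ hus)
  by_contra! hbad
  have hblock : ∀ w, (s, w) ∈ M →
      ∃ (C : Set V) (x : V), x ≠ s ∧ s ∉ C ∧ u ∈ C ∧ w ∈ C ∧ IsTight M r x C := by
    intro w hsw
    obtain ⟨v, hvr, hvs, hne⟩ := hbad w hsw
    obtain ⟨T, hvT, hrT, hT⟩ := exists_inDeg_eq_minCut (splitOff M u s w) hvr
    have := minCut_splitOff_le hus hsw hu hvr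
    obtain ⟨C, hsC, huC, hwC, hC⟩ :=
      exists_isTight_of_inDeg_splitOff_lt hM hus hsw hu hvT hrT (by omega)
    exact ⟨C, v, hvs, hsC, huC, hwC, hC⟩
  obtain ⟨W, hW⟩ := exists_finset_mem_iff M s
  have hWne : W.Nonempty :=
    have ⟨w, hsw⟩ := hM.exists_arc_out_of_arc_in hus
    ⟨w, (hW w).mpr hsw⟩
  obtain ⟨C, x, hxs, hsC, huC, hWC, hC⟩ :=
    exists_isTight_superset hM hus hWne fun w hw => hblock w ((hW w).mp hw)
  have hlt := hM.inDeg_insert_lt hss hus huC hsC fun w hsw => hWC ((hW w).mpr hsw)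
  have hsep : x ∈ insert s C ↔ r ∉ insert s C := by
    simpa [Set.mem_insert_iff, hxs, hrs] using hC.1
  have := hM.minCut_le_inDeg hsep
  have := hC.2
  omega

end Splitting

section Reduction

variable [DecidableEq V] {r s : V}

theorem isPreflow_iff {M : Multiset (V × V)} :
    IsPreflow M r ↔ ∀ v, v ≠ r →
      (M.filter fun a => a.1 = v).card ≤ (M.filter fun a => a.2 = v).card := by
  have key : ∀ (f : V × V → V) (v : V), (M.filter fun a => f a = v).card = (M.map f).count v :=
    fun f v => by rw [count_map]; exact congrArg card (filter_congr fun _ _ => eq_comm)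
  simp only [IsPreflow, key]

theorem hasDisjPaths_self (M : Multiset (V × V)) (r : V) (n : ℕ) : HasDisjPaths M r r n :=
  ⟨List.replicate n [r], by simp, by simp [List.mem_replicate], by simp⟩

theorem exists_isEulerian_add {E : Multiset (V × V)} (hE : IsPreflow E r) :
    ∃ A : Multiset (V × V), (∀ a ∈ A, a.2 = r) ∧ IsEulerian (E + A) := by
  set D := (E.map Prod.snd - E.map Prod.fst).filter (· ≠ r)
  have hfst : (D.map (·, r)).map Prod.fst = D := by simp [map_map]
  have hsnd : (D.map (·, r)).map Prod.snd = replicate (card D) r := by simp [map_map]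
  refine ⟨D.map (·, r), by simp, eq_of_card_eq_of_count_eq r (by simp) fun x hx => ?_⟩
  have := hE x hx
  rw [map_add, map_add, hfst, hsnd, count_add, count_add,
    count_filter_of_pos (p := (· ≠ r)) hx, count_sub, count_replicate, if_neg (Ne.symm hx)]
  omega

theorem IsEulerian.isPreflow_of_add {E A : Multiset (V × V)} (h : IsEulerian (E + A))
    (hA : ∀ a ∈ A, a.2 = r) : IsPreflow E r := by
  intro v hv
  have hcount := congrArg (count v) h
  have hAv : (A.map Prod.snd).count v = 0 :=
    count_eq_zero.mpr fun hmem => by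
      obtain ⟨a, ha, rfl⟩ := mem_map.mp hmem
      exact hv (hA a ha)
  simp only [map_add, count_add] at hcount
  omega

theorem IsEulerian.forall_ne_of_count_snd_eq_zero {E A : Multiset (V × V)}
    (h : IsEulerian (E + A)) (hs : ((E + A).map Prod.snd).count s = 0) :
    ∀ a ∈ E, a.1 ≠ s ∧ a.2 ≠ s := by
  intro a ha
  have hfst : ((E + A).map Prod.fst).count s = 0 := h ▸ hs
  rw [count_eq_zero] at hs hfst
  exact ⟨fun h => hfst (h ▸ mem_map_of_mem _ (mem_add.mpr (Or.inl ha))),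
    fun h => hs (h ▸ mem_map_of_mem _ (mem_add.mpr (Or.inl ha)))⟩

theorem splitOff_add_left {E A : Multiset (V × V)} {u w : V} (hus : (u, s) ∈ E)
    (hsw : (s, w) ∈ E) (hu : u ≠ s) : splitOff E u s w + A = splitOff (E + A) u s w := by
  have hsw' : (s, w) ∈ E.erase (u, s) :=
    (mem_erase_of_ne fun h => hu (Prod.ext_iff.mp h).1.symm).mpr hsw
  rw [splitOff, splitOff, erase_add_left_pos _ hus, erase_add_left_pos _ hsw', cons_add]

theorem splitOff_add_right {E A : Multiset (V × V)} {u w : V} (hus : (u, s) ∈ E)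
    (hsw : (s, w) ∈ A) : E.erase (u, s) + (u, w) ::ₘ A.erase (s, w) = splitOff (E + A) u s w := by
  rw [splitOff, erase_add_left_pos _ hus, erase_add_right_pos _ hsw, add_cons]

theorem exists_splitStep (hrs : r ≠ s) {E A : Multiset (V × V)} (hA : ∀ a ∈ A, a.2 = r)
    (hM : IsEulerian (E + A)) (hs : 0 < ((E + A).map Prod.snd).count s) :
    ∃ E₁ A₁, SplitStep s E E₁ ∧ (∀ a ∈ A₁, a.2 = r) ∧ IsEulerian (E₁ + A₁) ∧
      ((E₁ + A₁).map Prod.snd).count s < ((E + A).map Prod.snd).count s ∧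
      ∀ v, v ≠ r → v ≠ s → minCut (E₁ + A₁) r v = minCut (E + A) r v := by
  have hAs : ∀ x, (x, s) ∉ A := fun x h => hrs (hA _ h).symm
  by_cases hss : (s, s) ∈ E
  · have hEA : E + A = (s, s) ::ₘ (E.erase (s, s) + A) := by rw [← cons_add, cons_erase hss]
    rw [hEA] at hM ⊢
    refine ⟨E.erase (s, s), A, Or.inl ⟨s, hss, rfl⟩, hA, hM.of_cons_self, ?_,
      fun v _ _ => minCut_congr fun T _ => (inDeg_cons_self s _ T).symm⟩
    rw [map_cons, count_cons_self]
    omega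
  obtain ⟨u, hus⟩ : ∃ u, (u, s) ∈ E + A := by
    obtain ⟨⟨u, s'⟩, h, rfl⟩ := mem_map.mp (count_pos.mp hs)
    exact ⟨u, h⟩
  have huE : (u, s) ∈ E := (mem_add.mp hus).resolve_right (hAs u)
  have hu : u ≠ s := fun h => hss (h ▸ huE)
  obtain ⟨w, hsw, hcut⟩ := hM.exists_splitOff hrs hus fun h => (mem_add.mp h).elim hss (hAs s)
  suffices ∃ E₁ A₁, SplitStep s E E₁ ∧ (∀ a ∈ A₁, a.2 = r) ∧
      E₁ + A₁ = splitOff (E + A) u s w by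
    obtain ⟨E₁, A₁, hstep, hA₁, heq⟩ := this
    have := count_snd_splitOff hus hsw hu
    refine ⟨E₁, A₁, hstep, hA₁, heq ▸ isEulerian_splitOff hM hus hsw hu, ?_, heq ▸ hcut⟩
    rw [heq]
    omega
  rcases mem_add.mp hsw with hswE | hswA
  · exact ⟨splitOff E u s w, A, Or.inr ⟨u, w, huE, hswE, rfl⟩, hA, splitOff_add_left huE hswE hu⟩
  · refine ⟨E.erase (u, s), (u, w) ::ₘ A.erase (s, w), Or.inl ⟨u, huE, rfl⟩, ?_,
      splitOff_add_right huE hswA⟩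
    intro a ha
    rcases mem_cons.mp ha with rfl | ha
    exacts [hA (s, w) hswA, hA a (mem_of_mem_erase ha)]

theorem exists_reflTransGen_splitStep (hrs : r ≠ s) {E A : Multiset (V × V)}
    (hA : ∀ a ∈ A, a.2 = r) (hM : IsEulerian (E + A)) :
    ∃ E' A', Relation.ReflTransGen (SplitStep s) E E' ∧ (∀ a ∈ A', a.2 = r) ∧
      IsEulerian (E' + A') ∧ ((E' + A').map Prod.snd).count s = 0 ∧
      ∀ v, v ≠ r → v ≠ s → minCut (E' + A') r v = minCut (E + A) r v := by
  induction hn : ((E + A).map Prod.snd).count s using Nat.strong_induction_on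
    generalizing E A with
  | _ n ih =>
  rcases Nat.eq_zero_or_pos n with rfl | hpos
  · exact ⟨E, A, .refl, hA, hM, hn, fun _ _ _ => rfl⟩
  obtain ⟨E₁, A₁, hstep, hA₁, hM₁, hlt, hcut₁⟩ := exists_splitStep hrs hA hM (hn ▸ hpos)
  obtain ⟨E', A', hsteps, hA', hM', hs', hcut'⟩ := ih _ (hn ▸ hlt) hA₁ hM₁ rfl
  exact ⟨E', A', .head hstep hsteps, hA', hM', hs',
    fun v hvr hvs => (hcut' v hvr hvs).trans (hcut₁ v hvr hvs)⟩

end Reduction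

end SplittingOff

open SplittingOff in
/-- From an `r`-preflow multidigraph `D = (N ∪ {s}, E)` (in-degree ≥
out-degree at every node other than `r`), a sequence of deletions of arcs entering `s`
and splittings-off at `s` yields an `r`-preflow multidigraph `E'` with no arcs incident
to `s` in which the arc-connectivity `λ(r,v)` is preserved for every `v ∈ N`. -/
theorem preflow_splitting_off
    {V : Type*} [DecidableEq V]
    (E : Multiset (V × V)) (r s : V) (hrs : r ≠ s)
    (hpre : ∀ v : V, v ≠ r →
      (E.filter fun a => a.1 = v).card ≤ (E.filter fun a => a.2 = v).card) :
    ∃ E' : Multiset (V × V),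
      Relation.ReflTransGen (SplitStep s) E E' ∧
      (∀ a ∈ E', a.1 ≠ s ∧ a.2 ≠ s) ∧
      (∀ v : V, v ≠ r →
        (E'.filter fun a => a.1 = v).card ≤ (E'.filter fun a => a.2 = v).card) ∧
      (∀ v : V, v ≠ s → ∀ n : ℕ, HasDisjPaths E r v n ↔ HasDisjPaths E' r v n) := by
  obtain ⟨A, hA, hM⟩ := exists_isEulerian_add (isPreflow_iff.mpr hpre)
  obtain ⟨E', A', hsteps, hA', hM', hs, hcut⟩ := exists_reflTransGen_splitStep hrs hA hM
  refine ⟨E', hsteps, hM'.forall_ne_of_count_snd_eq_zero hs,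
    isPreflow_iff.mp (hM'.isPreflow_of_add hA'), fun v hvs n => ?_⟩
  rcases eq_or_ne v r with rfl | hvr
  · exact iff_of_true (hasDisjPaths_self E v n) (hasDisjPaths_self E' v n)
  rw [hasDisjPaths_iff_le_minCut hvr, hasDisjPaths_iff_le_minCut hvr,
    ← minCut_add_of_forall_snd_eq (E := E) hA,
    ← minCut_add_of_forall_snd_eq (E := E') hA', hcut v hvr hvs]
end

section
/- Let G=(V,A) be a digraph with root r, nonnegative arc costs c and nonnegative penalties π. Let (x,p) with x ∈ ℝ_+^A, p ∈ ℝ_+^V be a feasible solution to the prize-collecting walks LP: x(δ^in(S)) + p_v ≥ 1 for all S ⊆ V∖{r} and v ∈ S, and x(δ^in(v)) ≥ x(δ^out(v)) for all v ≠ r. Fix θ_v ≥ 0 with θ_v ≤ min{min_{(u,v)} c_{uv}, π_v} for each v ≠ r, and let c̃, π̃ be the reduced costs/penalties. Then Σ_a c_a x_a + Σ_v π_v p_v ≥ OPT(G,c̃,π̃) + Σ_{v≠r} θ_v, where OPT denotes the LP optimum. In particular OPT(G,c̃,π̃) ≤ OPT(G,c,π) − Σ_{v≠r} θ_v. -/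
open Finset

/-- Feasibility for the prize-collecting walks LP \eqref{eq:primal}:
`x ≥ 0` supported on `A`, `p ≥ 0`, coverage constraints
`x(δ^in(S)) + p v ≥ 1` for all `S ⊆ V ∖ {r}` and `v ∈ S`, and preflow constraints
`x(δ^in(v)) ≥ x(δ^out(v))` for `v ≠ r`. -/
def LPfeas {V : Type*} [Fintype V] [DecidableEq V]
    (A : Finset (V × V)) (r : V) (x : V → V → ℝ) (p : V → ℝ) : Prop :=
  (∀ u w, 0 ≤ x u w) ∧ (∀ u, 0 ≤ p u) ∧
  (∀ u w, (u, w) ∉ A → x u w = 0) ∧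
  (∀ S : Finset V, r ∉ S → ∀ v ∈ S, 1 ≤ (∑ u ∈ Sᶜ, ∑ w ∈ S, x u w) + p v) ∧
  (∀ v, v ≠ r → (∑ u, x v u) ≤ ∑ u, x u v)

/-- Optimal value of the prize-collecting walks LP. -/
noncomputable def lpOpt {V : Type*} [Fintype V] [DecidableEq V]
    (A : Finset (V × V)) (c : V → V → ℝ) (π : V → ℝ) (r : V) : ℝ :=
  sInf {z : ℝ | ∃ x p, LPfeas A r x p ∧
    z = (∑ u, ∑ w, c u w * x u w) + ∑ u, π u * p u}

lemma key_ineq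
    {V : Type*} [Fintype V] [DecidableEq V]
    (A : Finset (V × V)) (r : V) (c : V → V → ℝ) (π θ : V → ℝ)
    (hc : ∀ u w, 0 ≤ c u w) (hπ : ∀ u, 0 ≤ π u)
    (hθ0 : ∀ v, 0 ≤ θ v) (hθr : θ r = 0)
    (hθc : ∀ u v, v ≠ r → (u, v) ∈ A → θ v ≤ c u v)
    (hθπ : ∀ v, v ≠ r → θ v ≤ π v)
    (x : V → V → ℝ) (p : V → ℝ) (hfeas : LPfeas A r x p) :
    lpOpt A (fun u v => c u v - θ v) (fun v => π v - θ v) r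
        + ∑ v ∈ Finset.univ.erase r, θ v ≤
      (∑ u, ∑ w, c u w * x u w) + ∑ u, π u * p u := by
  obtain ⟨hx0, hp0, hxA, hcov, hpre⟩ := hfeas
  have hbdd : BddBelow {z : ℝ | ∃ x p, LPfeas A r x p ∧
      z = (∑ u, ∑ w, (c u w - θ w) * x u w) + ∑ u, (π u - θ u) * p u} := by
    refine ⟨0, ?_⟩
    rintro z ⟨x', p', ⟨hx0', hp0', hxA', _, _⟩, rfl⟩
    have h1 : 0 ≤ ∑ u, ∑ w, (c u w - θ w) * x' u w := by
      apply Finset.sum_nonneg; intro u _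
      apply Finset.sum_nonneg; intro w _
      by_cases hA : (u, w) ∈ A
      · by_cases hw : w = r
        · subst hw; rw [hθr, sub_zero]
          exact mul_nonneg (hc u w) (hx0' u w)
        · exact mul_nonneg (sub_nonneg.mpr (hθc u w hw hA)) (hx0' u w)
      · rw [hxA' u w hA, mul_zero]
    have h2 : 0 ≤ ∑ u, (π u - θ u) * p' u := by
      apply Finset.sum_nonneg; intro u _
      by_cases hu : u = r
      · subst hu; rw [hθr, sub_zero]; exact mul_nonneg (hπ u) (hp0' u)
      · exact mul_nonneg (sub_nonneg.mpr (hθπ u hu)) (hp0' u)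
    linarith
  have hle : lpOpt A (fun u v => c u v - θ v) (fun v => π v - θ v) r ≤
      (∑ u, ∑ w, (c u w - θ w) * x u w) + ∑ u, (π u - θ u) * p u :=
    csInf_le hbdd ⟨x, p, ⟨hx0, hp0, hxA, hcov, hpre⟩, rfl⟩
  have e1 : ∑ u, ∑ w, (c u w - θ w) * x u w
      = (∑ u, ∑ w, c u w * x u w) - ∑ u, ∑ w, θ w * x u w := by
    simp [sub_mul, Finset.sum_sub_distrib]
  have e2 : ∑ u, (π u - θ u) * p u
      = (∑ u, π u * p u) - ∑ u, θ u * p u := by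
    simp [sub_mul, Finset.sum_sub_distrib]
  have e3 : ∑ u, ∑ w, θ w * x u w = ∑ w, θ w * ∑ u, x u w := by
    rw [Finset.sum_comm]
    simp [Finset.mul_sum]
  have hlb : ∑ v ∈ Finset.univ.erase r, θ v
      ≤ ∑ w, θ w * ((∑ u, x u w) + p w) := by
    have step1 : ∑ v ∈ Finset.univ.erase r, θ v
        ≤ ∑ v ∈ Finset.univ.erase r, θ v * ((∑ u, x u v) + p v) := by
      apply Finset.sum_le_sum
      intro v hv
      have hvr : v ≠ r := Finset.ne_of_mem_erase hv
      have hcv := hcov {v} (by simp [Ne.symm hvr]) v (Finset.mem_singleton_self v)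
      have hmono : (∑ u ∈ ({v} : Finset V)ᶜ, ∑ w ∈ ({v} : Finset V), x u w)
          ≤ ∑ u, x u v := by
        simp only [Finset.sum_singleton]
        exact Finset.sum_le_sum_of_subset_of_nonneg (Finset.subset_univ _)
          (fun u _ _ => hx0 u v)
      nlinarith [hθ0 v]
    refine step1.trans (Finset.sum_le_sum_of_subset_of_nonneg (Finset.subset_univ _) ?_)
    intro w _ _
    have hs : 0 ≤ (∑ u, x u w) + p w :=
      add_nonneg (Finset.sum_nonneg fun u _ => hx0 u w) (hp0 w)
    exact mul_nonneg (hθ0 w) hs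
  have e4 : ∑ w, θ w * ((∑ u, x u w) + p w)
      = (∑ w, θ w * ∑ u, x u w) + ∑ w, θ w * p w := by
    simp [mul_add, Finset.sum_add_distrib]
  linarith

/-- For any feasible LP solution `(x,p)` and any admissible shift `θ`,
the objective value of `(x,p)` is at least `OPT(G,c̃,π̃) + ∑_{v≠r} θ v`; in particular
`OPT(G,c̃,π̃) ≤ OPT(G,c,π) − ∑_{v≠r} θ v`. -/
theorem lp_shift
    {V : Type*} [Fintype V] [DecidableEq V]
    (A : Finset (V × V)) (r : V) (c : V → V → ℝ) (π θ : V → ℝ)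
    (hc : ∀ u w, 0 ≤ c u w) (hπ : ∀ u, 0 ≤ π u)
    (hθ0 : ∀ v, 0 ≤ θ v) (hθr : θ r = 0)
    (hθc : ∀ u v, v ≠ r → (u, v) ∈ A → θ v ≤ c u v)
    (hθπ : ∀ v, v ≠ r → θ v ≤ π v)
    (x : V → V → ℝ) (p : V → ℝ) (hfeas : LPfeas A r x p) :
    (lpOpt A (fun u v => c u v - θ v) (fun v => π v - θ v) r
        + ∑ v ∈ Finset.univ.erase r, θ v ≤
      (∑ u, ∑ w, c u w * x u w) + ∑ u, π u * p u) ∧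
    lpOpt A (fun u v => c u v - θ v) (fun v => π v - θ v) r ≤
      lpOpt A c π r - ∑ v ∈ Finset.univ.erase r, θ v := by
  constructor
  · exact key_ineq A r c π θ hc hπ hθ0 hθr hθc hθπ x p hfeas
  · rw [le_sub_iff_add_le]
    have hne : {z : ℝ | ∃ x p, LPfeas A r x p ∧
        z = (∑ u, ∑ w, c u w * x u w) + ∑ u, π u * p u}.Nonempty :=
      ⟨_, x, p, hfeas, rfl⟩
    refine le_csInf hne ?_
    rintro z ⟨x', p', hfeas', rfl⟩
    exact key_ineq A r c π θ hc hπ hθ0 hθr hθc hθπ x' p' hfeas'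
end

section
/- Let (x,p) be a feasible solution to the prize-collecting walks LP for instance (G,c̃,π̃) with root r, and let Z be a directed cycle avoiding r with all arcs of c̃-cost 0. Define, on the contraction Ḡ of Z to a supernode u_Z: x̄_{u,w}=x_{u,w} for arcs between nodes outside Z, x̄_{u,u_Z} = x(δ^out(u) ∩ δ^in(Z)), x̄_{u_Z,u} = x(δ^in(u) ∩ δ^out(Z)); p̄_u = p_u for u ∉ Z and p̄_{u_Z} = min_{v∈Z} p_v; penalties π̄_{u_Z} = Σ_{v∈Z} π̃_v, arc costs as the corresponding minima. Then (x̄,p̄) is feasible for the LP on (Ḡ,c̄,π̄) with objective value at most that of (x,p); hence OPT(Ḡ,c̄,π̄) ≤ OPT(G,c̃,π̃). -/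
open Finset

/-
The contracted solution is the image of `x`, with the arcs inside `Z` deleted, under the map
`collapse` sending `Z` to `u_Z` and fixing every other vertex. Arc weights transported along a
vertex map satisfy `x̄(δ^in(S̄)) = x(δ^in(φ⁻¹ S̄))` and have net outflow at `v` equal to the total
net outflow of the fibre over `v`; deleting arcs inside `Z` only changes the loop at `u_Z`, which
enters neither quantity. Hence cuts and flow conservation carry over, `p̄_{u_Z} = min_Z p` is the
penalty of some vertex of the preimage, and each arc of `Ḡ` costs at most the arcs it replaces,
while `π̄_{u_Z} · min_Z p ≤ Σ_Z π p`.
-/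

section Pushforward

variable {V W : Type*} [Fintype V] [DecidableEq W]

def pushforward (φ : V → W) (y : V → V → ℝ) (u w : W) : ℝ :=
  ∑ a with φ a = u, ∑ b with φ b = w, y a b

lemma sum_sum_mul_pushforward (φ : V → W) (y : V → V → ℝ) (g : W → W → ℝ) (s t : Finset W) :
    ∑ u ∈ s, ∑ w ∈ t, g u w * pushforward φ y u w =
      ∑ a with φ a ∈ s, ∑ b with φ b ∈ t, g (φ a) (φ b) * y a b := by
  calc ∑ u ∈ s, ∑ w ∈ t, g u w * pushforward φ y u w
      = ∑ u ∈ s, ∑ a with φ a = u, ∑ w ∈ t, ∑ b with φ b = w, g (φ a) (φ b) * y a b := by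
        refine sum_congr rfl fun u _ => ?_
        simp only [pushforward, mul_sum]
        rw [sum_comm]
        refine sum_congr rfl fun a ha => sum_congr rfl fun w _ => sum_congr rfl fun b hb => ?_
        rw [(mem_filter.1 ha).2, (mem_filter.1 hb).2]
    _ = _ := by simp only [sum_fiberwise_eq_sum_filter]

lemma pushforward_nonneg {φ : V → W} {y : V → V → ℝ} (hy : ∀ a b, 0 ≤ y a b) (u w : W) :
    0 ≤ pushforward φ y u w :=
  sum_nonneg fun a _ => sum_nonneg fun b _ => hy a b

lemma pushforward_eq_zero {φ : V → W} {y : V → V → ℝ} {u w : W}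
    (hy : ∀ a b, φ a = u → φ b = w → y a b = 0) : pushforward φ y u w = 0 :=
  sum_eq_zero fun a ha => sum_eq_zero fun b hb => hy a b (mem_filter.1 ha).2 (mem_filter.1 hb).2

lemma pushforward_congr_of_ne {φ : V → W} {y y' : V → V → ℝ}
    (h : ∀ a b, φ a ≠ φ b → y a b = y' a b) {u w : W} (huw : u ≠ w) :
    pushforward φ y u w = pushforward φ y' u w :=
  sum_congr rfl fun a ha => sum_congr rfl fun b hb =>
    h a b (by rw [(mem_filter.1 ha).2, (mem_filter.1 hb).2]; exact huw)

variable [Fintype W]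

lemma cut_pushforward [DecidableEq V] (φ : V → W) (y : V → V → ℝ) (S : Finset W) :
    ∑ u ∈ Sᶜ, ∑ w ∈ S, pushforward φ y u w =
      ∑ a ∈ ({a | φ a ∈ S} : Finset V)ᶜ, ∑ b with φ b ∈ S, y a b := by
  simpa [compl_filter] using sum_sum_mul_pushforward φ y (fun _ _ => 1) Sᶜ S

lemma sum_pushforward_sub_sum_pushforward (φ : V → W) (y : V → V → ℝ) (v : W) :
    ∑ w, pushforward φ y v w - ∑ u, pushforward φ y u v =
      ∑ a with φ a = v, (∑ b, y a b - ∑ b, y b a) := by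
  have hout := sum_sum_mul_pushforward φ y (fun _ _ => 1) {v} univ
  have hin := sum_sum_mul_pushforward φ y (fun _ _ => 1) univ {v}
  simp only [sum_singleton, one_mul, mem_singleton, mem_univ, filter_true] at hout hin
  rw [hout, hin, sum_comm (s := univ), sum_sub_distrib]

end Pushforward

section OffDiagonal

variable {W : Type*} [Fintype W] [DecidableEq W] {f g : W → W → ℝ}

lemma cut_congr_of_ne (h : ∀ u w, u ≠ w → f u w = g u w) (S : Finset W) :
    ∑ u ∈ Sᶜ, ∑ w ∈ S, f u w = ∑ u ∈ Sᶜ, ∑ w ∈ S, g u w :=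
  sum_congr rfl fun u hu => sum_congr rfl fun w hw =>
    h u w fun huw => mem_compl.1 hu (huw ▸ hw)

lemma sum_sub_sum_congr_of_ne (h : ∀ u w, u ≠ w → f u w = g u w) (v : W) :
    ∑ w, f v w - ∑ u, f u v = ∑ w, g v w - ∑ u, g u v := by
  have off_diag : ∀ k : W → W → ℝ,
      ∑ w, k v w - ∑ u, k u v = ∑ w ∈ univ.erase v, k v w - ∑ u ∈ univ.erase v, k u v := by
    intro k
    rw [← add_sum_erase _ (k v) (mem_univ v), ← add_sum_erase _ (fun u => k u v) (mem_univ v)]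
    ring
  rw [off_diag f, off_diag g, sum_congr rfl fun w hw => h v w (ne_of_mem_erase hw).symm,
    sum_congr rfl fun u hu => h u v (ne_of_mem_erase hu)]

end OffDiagonal

section Collapse

variable {V : Type*} [DecidableEq V] {Z : Finset V} {uZ : V}

def collapse (Z : Finset V) (uZ v : V) : V := if v ∈ Z then uZ else v

def deleteArcsWithin (Z : Finset V) (x : V → V → ℝ) (a b : V) : ℝ :=
  if a ∈ Z ∧ b ∈ Z then 0 else x a b

/- The `(x̄, p̄)` of the statement. The vertices of `Z` other than `uZ` stay in `V` but are
isolated in `Ḡ`: their arcs carry `0` and their penalty variable is `1`. -/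
def contractArcs (Z : Finset V) (uZ : V) (x : V → V → ℝ) (u w : V) : ℝ :=
  if u ∈ Z then (if u = uZ ∧ w ∉ Z then ∑ z ∈ Z, x z w else 0)
  else if w ∈ Z then (if w = uZ then ∑ z ∈ Z, x u z else 0)
  else x u w

def contractPenalty (Z : Finset V) (uZ : V) (hZ : Z.Nonempty) (p : V → ℝ) (u : V) : ℝ :=
  if u = uZ then Z.inf' hZ p else if u ∈ Z then 1 else p u

lemma collapse_apply_of_mem {v : V} (hv : v ∈ Z) : collapse Z uZ v = uZ := if_pos hv

lemma collapse_apply_of_notMem {v : V} (hv : v ∉ Z) : collapse Z uZ v = v := if_neg hv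

lemma not_both_mem_of_collapse_ne {a b : V} (h : collapse Z uZ a ≠ collapse Z uZ b) :
    ¬(a ∈ Z ∧ b ∈ Z) := fun ⟨ha, hb⟩ =>
  h (by rw [collapse_apply_of_mem ha, collapse_apply_of_mem hb])

lemma contractPenalty_eq_one_or_exists (hZ : Z.Nonempty) (p : V → ℝ) (v : V) :
    contractPenalty Z uZ hZ p v = 1 ∨
      ∃ a, collapse Z uZ a = v ∧ p a = contractPenalty Z uZ hZ p v := by
  unfold contractPenalty
  split_ifs with hv hvZ
  · obtain ⟨z, hz, hmin⟩ := exists_mem_eq_inf' hZ p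
    exact Or.inr ⟨z, hv ▸ collapse_apply_of_mem hz, hmin.symm⟩
  · exact Or.inl rfl
  · exact Or.inr ⟨v, collapse_apply_of_notMem hvZ, rfl⟩

variable [Fintype V]

lemma filter_collapse_eq (huZ : uZ ∈ Z) (v : V) :
    ({a | collapse Z uZ a = v} : Finset V) = if v = uZ then Z else if v ∈ Z then ∅ else {v} := by
  ext a
  by_cases ha : a ∈ Z <;> by_cases hv : v = uZ <;> by_cases hvZ : v ∈ Z <;>
    simp [collapse, ha, hv, hvZ] <;> grind

lemma contractArcs_eq_pushforward (huZ : uZ ∈ Z) (x : V → V → ℝ) :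
    contractArcs Z uZ x = pushforward (collapse Z uZ) (deleteArcsWithin Z x) := by
  ext u w
  simp only [contractArcs, pushforward, filter_collapse_eq huZ, deleteArcsWithin]
  split_ifs <;> simp_all

end Collapse

section ContractedInstance

variable {V : Type*} [DecidableEq V]

def IsContractedArcSet (A Abar : Finset (V × V)) (Z : Finset V) (uZ : V) : Prop :=
  ∀ u w : V, (u, w) ∈ Abar ↔
    (u ∉ Z ∧ w ∉ Z ∧ (u, w) ∈ A) ∨
    (u ∉ Z ∧ w = uZ ∧ ∃ z ∈ Z, (u, z) ∈ A) ∨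
    (u = uZ ∧ w ∉ Z ∧ ∃ z ∈ Z, (z, w) ∈ A)

def IsContractedCost (A : Finset (V × V)) (Z : Finset V) (uZ : V) (c cbar : V → V → ℝ) : Prop :=
  (∀ u w, u ∉ Z → w ∉ Z → cbar u w = c u w) ∧
  (∀ u, u ∉ Z → ∀ h : (Z.filter fun z => (u, z) ∈ A).Nonempty,
    cbar u uZ = (Z.filter fun z => (u, z) ∈ A).inf' h fun z => c u z) ∧
  (∀ w, w ∉ Z → ∀ h : (Z.filter fun z => (z, w) ∈ A).Nonempty,
    cbar uZ w = (Z.filter fun z => (z, w) ∈ A).inf' h fun z => c z w)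

def IsContractedPenalty (Z : Finset V) (uZ : V) (π πbar : V → ℝ) : Prop :=
  πbar uZ = ∑ z ∈ Z, π z ∧ (∀ u, u ∉ Z → πbar u = π u) ∧ (∀ u ∈ Z, u ≠ uZ → πbar u = 0)

variable {A Abar : Finset (V × V)} {Z : Finset V} {uZ : V}

lemma IsContractedArcSet.collapse_mem (hAbar : IsContractedArcSet A Abar Z uZ) {a b : V}
    (hab : (a, b) ∈ A) (hZ : ¬(a ∈ Z ∧ b ∈ Z)) : (collapse Z uZ a, collapse Z uZ b) ∈ Abar := by
  rw [hAbar]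
  by_cases ha : a ∈ Z
  · have hb : b ∉ Z := fun hb => hZ ⟨ha, hb⟩
    rw [collapse_apply_of_mem ha, collapse_apply_of_notMem hb]
    exact Or.inr (Or.inr ⟨rfl, hb, a, ha, hab⟩)
  · by_cases hb : b ∈ Z
    · rw [collapse_apply_of_notMem ha, collapse_apply_of_mem hb]
      exact Or.inr (Or.inl ⟨ha, rfl, b, hb, hab⟩)
    · rw [collapse_apply_of_notMem ha, collapse_apply_of_notMem hb]
      exact Or.inl ⟨ha, hb, hab⟩

lemma IsContractedCost.le_of_mem {c cbar : V → V → ℝ} (hcbar : IsContractedCost A Z uZ c cbar)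
    {a b : V} (hab : (a, b) ∈ A) (hZ : ¬(a ∈ Z ∧ b ∈ Z)) :
    cbar (collapse Z uZ a) (collapse Z uZ b) ≤ c a b := by
  obtain ⟨hout, hto, hfrom⟩ := hcbar
  by_cases ha : a ∈ Z
  · have hb : b ∉ Z := fun hb => hZ ⟨ha, hb⟩
    have hmem : a ∈ Z.filter fun z => (z, b) ∈ A := mem_filter.2 ⟨ha, hab⟩
    rw [collapse_apply_of_mem ha, collapse_apply_of_notMem hb, hfrom b hb ⟨a, hmem⟩]
    exact inf'_le _ hmem
  · rw [collapse_apply_of_notMem ha]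
    by_cases hb : b ∈ Z
    · have hmem : b ∈ Z.filter fun z => (a, z) ∈ A := mem_filter.2 ⟨hb, hab⟩
      rw [collapse_apply_of_mem hb, hto a ha ⟨b, hmem⟩]
      exact inf'_le _ hmem
    · rw [collapse_apply_of_notMem hb, hout a b ha hb]

lemma IsContractedCost.nonneg_of_mem {c cbar : V → V → ℝ}
    (hcbar : IsContractedCost A Z uZ c cbar) (hAbar : IsContractedArcSet A Abar Z uZ)
    (hc : ∀ u w, 0 ≤ c u w) {u w : V} (huw : (u, w) ∈ Abar) : 0 ≤ cbar u w := by
  obtain ⟨hout, hto, hfrom⟩ := hcbar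
  rcases (hAbar u w).1 huw with ⟨hu, hw, -⟩ | ⟨hu, rfl, z, hz, hA⟩ | ⟨rfl, hw, z, hz, hA⟩
  · rw [hout u w hu hw]; exact hc u w
  · rw [hto u hu ⟨z, mem_filter.2 ⟨hz, hA⟩⟩]; exact le_inf' _ _ fun b _ => hc u b
  · rw [hfrom w hw ⟨z, mem_filter.2 ⟨hz, hA⟩⟩]; exact le_inf' _ _ fun b _ => hc b w

lemma IsContractedPenalty.nonneg {π πbar : V → ℝ} (hπbar : IsContractedPenalty Z uZ π πbar)
    (hπ : ∀ u, 0 ≤ π u) (u : V) : 0 ≤ πbar u := by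
  obtain ⟨hsuper, hout, hdel⟩ := hπbar
  by_cases hu : u ∈ Z
  · by_cases h : u = uZ
    · rw [h, hsuper]; exact sum_nonneg fun z _ => hπ z
    · rw [hdel u hu h]
  · rw [hout u hu]; exact hπ u

end ContractedInstance

section ContractedSolution

variable {V : Type*} [Fintype V] [DecidableEq V] {Z : Finset V} {uZ : V}

lemma contractArcs_eq_pushforward_of_ne (huZ : uZ ∈ Z) (x : V → V → ℝ) {u w : V} (huw : u ≠ w) :
    contractArcs Z uZ x u w = pushforward (collapse Z uZ) x u w := by
  rw [contractArcs_eq_pushforward huZ]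
  exact pushforward_congr_of_ne (fun a b h => if_neg (not_both_mem_of_collapse_ne h)) huw

lemma LPfeas.contract {A Abar : Finset (V × V)} {r : V} {x : V → V → ℝ} {p : V → ℝ}
    (hfeas : LPfeas A r x p) (hrZ : r ∉ Z) (huZ : uZ ∈ Z) (hZ : Z.Nonempty)
    (hAbar : IsContractedArcSet A Abar Z uZ) :
    LPfeas Abar r (contractArcs Z uZ x) (contractPenalty Z uZ hZ p) := by
  obtain ⟨hx, hp, hsupp, hcut, hflow⟩ := hfeas
  have hcollapse_r : collapse Z uZ r = r := collapse_apply_of_notMem hrZ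
  refine ⟨?nonneg, ?penalty_nonneg, ?support, ?cut, ?flow⟩
  case nonneg =>
    intro u w
    rw [contractArcs_eq_pushforward huZ]
    refine pushforward_nonneg (fun a b => ?_) u w
    unfold deleteArcsWithin
    split_ifs
    exacts [le_rfl, hx a b]
  case penalty_nonneg =>
    intro u
    unfold contractPenalty
    split_ifs
    exacts [le_inf' hZ p fun b _ => hp b, zero_le_one, hp u]
  case support =>
    intro u w huw
    rw [contractArcs_eq_pushforward huZ]
    refine pushforward_eq_zero fun a b ha hb => ?_
    unfold deleteArcsWithin
    split_ifs with hZab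
    · rfl
    · by_contra hab
      exact huw (ha ▸ hb ▸ hAbar.collapse_mem (not_imp_comm.1 (hsupp a b) hab) hZab)
  case cut =>
    intro S hrS v hv
    have hrT : r ∉ ({a | collapse Z uZ a ∈ S} : Finset V) := by simpa [hcollapse_r] using hrS
    rw [cut_congr_of_ne (fun u w => contractArcs_eq_pushforward_of_ne huZ x) S, cut_pushforward]
    rcases contractPenalty_eq_one_or_exists hZ p v with hv1 | ⟨a, ha, hpa⟩
    · rw [hv1, le_add_iff_nonneg_left]
      exact sum_nonneg fun a _ => sum_nonneg fun b _ => hx a b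
    · rw [← hpa]
      exact hcut _ hrT a (by simpa [ha] using hv)
  case flow =>
    intro v hvr
    rw [← sub_nonpos, sum_sub_sum_congr_of_ne (fun u w => contractArcs_eq_pushforward_of_ne huZ x),
      sum_pushforward_sub_sum_pushforward]
    refine sum_nonpos fun a ha => sub_nonpos.2 (hflow a ?_)
    rintro rfl
    exact hvr ((mem_filter.1 ha).2 ▸ hcollapse_r)

end ContractedSolution

section Objective

variable {V : Type*} [Fintype V] [DecidableEq V]

def lpObjective (c : V → V → ℝ) (π : V → ℝ) (x : V → V → ℝ) (p : V → ℝ) : ℝ :=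
  (∑ u, ∑ w, c u w * x u w) + ∑ u, π u * p u

variable {A Abar : Finset (V × V)} {r : V} {Z : Finset V} {uZ : V}

lemma arcCost_contract_le {c cbar x : V → V → ℝ} (huZ : uZ ∈ Z)
    (hcbar : IsContractedCost A Z uZ c cbar) (hc : ∀ u w, 0 ≤ c u w)
    (hx : ∀ u w, 0 ≤ x u w) (hsupp : ∀ u w, (u, w) ∉ A → x u w = 0) :
    ∑ u, ∑ w, cbar u w * contractArcs Z uZ x u w ≤ ∑ u, ∑ w, c u w * x u w := by
  have hpush := sum_sum_mul_pushforward (collapse Z uZ) (deleteArcsWithin Z x) cbar univ univ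
  simp only [mem_univ, filter_true] at hpush
  rw [contractArcs_eq_pushforward huZ, hpush]
  refine sum_le_sum fun a _ => sum_le_sum fun b _ => ?_
  unfold deleteArcsWithin
  split_ifs with hZab
  · rw [mul_zero]; exact mul_nonneg (hc a b) (hx a b)
  by_cases hab : (a, b) ∈ A
  · exact mul_le_mul_of_nonneg_right (hcbar.le_of_mem hab hZab) (hx a b)
  · simp [hsupp a b hab]

lemma penaltyCost_contract_le {π πbar p : V → ℝ} (huZ : uZ ∈ Z) (hZ : Z.Nonempty)
    (hπbar : IsContractedPenalty Z uZ π πbar) (hπ : ∀ u, 0 ≤ π u) :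
    ∑ u, πbar u * contractPenalty Z uZ hZ p u ≤ ∑ u, π u * p u := by
  obtain ⟨hsuper, hout, hdel⟩ := hπbar
  rw [← sum_add_sum_compl Z, ← sum_add_sum_compl Z (fun u => π u * p u)]
  refine add_le_add ?_ (sum_le_sum fun u hu => ?_)
  · calc ∑ u ∈ Z, πbar u * contractPenalty Z uZ hZ p u
        = πbar uZ * Z.inf' hZ p := by
          rw [sum_eq_single_of_mem uZ huZ fun u hu hne => by rw [hdel u hu hne, zero_mul]]
          simp [contractPenalty]
      _ = ∑ z ∈ Z, π z * Z.inf' hZ p := by rw [hsuper, sum_mul]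
      _ ≤ ∑ z ∈ Z, π z * p z :=
          sum_le_sum fun z hz => mul_le_mul_of_nonneg_left (inf'_le p hz) (hπ z)
  · have hu : u ∉ Z := mem_compl.1 hu
    have hne : u ≠ uZ := fun h => hu (h ▸ huZ)
    simp [contractPenalty, hout u hu, hne, hu]

lemma lpObjective_nonneg {c : V → V → ℝ} {π : V → ℝ} {x : V → V → ℝ} {p : V → ℝ}
    (hc : ∀ u w, (u, w) ∈ A → 0 ≤ c u w) (hπ : ∀ u, 0 ≤ π u) (hfeas : LPfeas A r x p) :
    0 ≤ lpObjective c π x p := by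
  obtain ⟨hx, hp, hsupp, -, -⟩ := hfeas
  refine add_nonneg (sum_nonneg fun u _ => sum_nonneg fun w _ => ?_)
    (sum_nonneg fun u _ => mul_nonneg (hπ u) (hp u))
  by_cases huw : (u, w) ∈ A
  · exact mul_nonneg (hc u w huw) (hx u w)
  · rw [hsupp u w huw, mul_zero]

lemma lpOpt_le_lpOpt {c c' : V → V → ℝ} {π π' : V → ℝ} {r' : V}
    (hc' : ∀ u w, (u, w) ∈ Abar → 0 ≤ c' u w) (hπ' : ∀ u, 0 ≤ π' u)
    (hfeas : ∃ x p, LPfeas A r x p)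
    (hmap : ∀ x p, LPfeas A r x p →
      ∃ x' p', LPfeas Abar r' x' p' ∧ lpObjective c' π' x' p' ≤ lpObjective c π x p) :
    lpOpt Abar c' π' r' ≤ lpOpt A c π r := by
  have hbdd : BddBelow {z | ∃ x p, LPfeas Abar r' x p ∧ z = lpObjective c' π' x p} := by
    refine ⟨0, ?_⟩
    rintro _ ⟨x, p, hf, rfl⟩
    exact lpObjective_nonneg hc' hπ' hf
  obtain ⟨x, p, hf⟩ := hfeas
  refine le_csInf ⟨_, x, p, hf, rfl⟩ ?_
  rintro _ ⟨x, p, hf, rfl⟩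
  obtain ⟨x', p', hf', hle⟩ := hmap x p hf
  exact (csInf_le hbdd ⟨x', p', hf', rfl⟩).trans hle

end Objective

theorem lp_contract_cycle_general
    {V : Type*} [Fintype V] [DecidableEq V]
    (A Abar : Finset (V × V)) (r uZ : V) (Z : Finset V) (hZne : Z.Nonempty)
    (c cbar : V → V → ℝ) (π πbar : V → ℝ)
    (hc : ∀ u w, 0 ≤ c u w) (hπ : ∀ u, 0 ≤ π u)
    (hrZ : r ∉ Z) (huZ : uZ ∈ Z)
    (hAbar : ∀ u w : V, (u, w) ∈ Abar ↔
      (u ∉ Z ∧ w ∉ Z ∧ (u, w) ∈ A) ∨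
      (u ∉ Z ∧ w = uZ ∧ ∃ z ∈ Z, (u, z) ∈ A) ∨
      (u = uZ ∧ w ∉ Z ∧ ∃ z ∈ Z, (z, w) ∈ A))
    (hcbar1 : ∀ u w, u ∉ Z → w ∉ Z → cbar u w = c u w)
    (hcbar2 : ∀ u, u ∉ Z → ∀ h : (Z.filter fun z => (u, z) ∈ A).Nonempty,
      cbar u uZ = (Z.filter fun z => (u, z) ∈ A).inf' h fun z => c u z)
    (hcbar3 : ∀ w, w ∉ Z → ∀ h : (Z.filter fun z => (z, w) ∈ A).Nonempty,
      cbar uZ w = (Z.filter fun z => (z, w) ∈ A).inf' h fun z => c z w)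
    (hπbar1 : πbar uZ = ∑ z ∈ Z, π z)
    (hπbar2 : ∀ u, u ∉ Z → πbar u = π u)
    (hπbar3 : ∀ u ∈ Z, u ≠ uZ → πbar u = 0)
    (x : V → V → ℝ) (p : V → ℝ) (hfeas : LPfeas A r x p) :
    (LPfeas Abar r
        (fun u w =>
          if u ∈ Z then (if u = uZ ∧ w ∉ Z then ∑ z ∈ Z, x z w else 0)
          else if w ∈ Z then (if w = uZ then ∑ z ∈ Z, x u z else 0)
          else x u w)
        (fun u => if u = uZ then Z.inf' hZne p else if u ∈ Z then 1 else p u)) ∧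
    ((∑ u, ∑ w, cbar u w *
        (if u ∈ Z then (if u = uZ ∧ w ∉ Z then ∑ z ∈ Z, x z w else 0)
         else if w ∈ Z then (if w = uZ then ∑ z ∈ Z, x u z else 0)
         else x u w)) +
      ∑ u, πbar u * (if u = uZ then Z.inf' hZne p else if u ∈ Z then 1 else p u) ≤
        (∑ u, ∑ w, c u w * x u w) + ∑ u, π u * p u) ∧
    lpOpt Abar cbar πbar r ≤ lpOpt A c π r := by
  have hcbar : IsContractedCost A Z uZ c cbar := ⟨hcbar1, hcbar2, hcbar3⟩
  have hπbar : IsContractedPenalty Z uZ π πbar := ⟨hπbar1, hπbar2, hπbar3⟩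
  have contract : ∀ x p, LPfeas A r x p →
      LPfeas Abar r (contractArcs Z uZ x) (contractPenalty Z uZ hZne p) ∧
      lpObjective cbar πbar (contractArcs Z uZ x) (contractPenalty Z uZ hZne p) ≤
        lpObjective c π x p := fun x p hf =>
    ⟨hf.contract hrZ huZ hZne hAbar,
      add_le_add (arcCost_contract_le huZ hcbar hc hf.1 hf.2.2.1)
        (penaltyCost_contract_le huZ hZne hπbar hπ)⟩
  refine ⟨(contract x p hfeas).1, (contract x p hfeas).2, ?_⟩
  exact lpOpt_le_lpOpt (fun u w => hcbar.nonneg_of_mem hAbar hc) (hπbar.nonneg hπ) ⟨x, p, hfeas⟩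
    fun x p hf => ⟨_, _, contract x p hf⟩

/-- Contracting a zero-cost cycle `Z` (vertex list `L`, avoiding `r`)
into a supernode `uZ`: the explicitly defined `(x̄, p̄)` — with
`x̄_{u,uZ} = x(δ^out(u) ∩ δ^in(Z))`, `x̄_{uZ,u} = x(δ^in(u) ∩ δ^out(Z))`,
`x̄_{u,w} = x_{u,w}` outside `Z`, `p̄_{uZ} = min_{z ∈ Z} p z`, `p̄_u = p u` outside `Z`
(deleted nodes of `Z` get `x̄ = 0`, `p̄ = 1`, penalty `0`) — is feasible for the
contracted instance with objective at most that of `(x,p)`; hence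
`OPT(Ḡ,c̄,π̄) ≤ OPT(G,c̃,π̃)`. -/
theorem lp_contract_cycle
    {V : Type*} [Fintype V] [DecidableEq V]
    (A Abar : Finset (V × V)) (r uZ : V) (Z : Finset V) (hZne : Z.Nonempty)
    (c cbar : V → V → ℝ) (π πbar : V → ℝ) (L : List V)
    (hc : ∀ u w, 0 ≤ c u w) (hπ : ∀ u, 0 ≤ π u)
    (hrZ : r ∉ Z) (huZ : uZ ∈ Z)
    (hLne : L ≠ []) (hLnd : L.Nodup) (hLZ : L.toFinset = Z)
    (hLarc : ∀ q ∈ L.zip (L.rotate 1), (q.1, q.2) ∈ A ∧ c q.1 q.2 = 0)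
    (hAbar : ∀ u w : V, (u, w) ∈ Abar ↔
      (u ∉ Z ∧ w ∉ Z ∧ (u, w) ∈ A) ∨
      (u ∉ Z ∧ w = uZ ∧ ∃ z ∈ Z, (u, z) ∈ A) ∨
      (u = uZ ∧ w ∉ Z ∧ ∃ z ∈ Z, (z, w) ∈ A))
    (hcbar1 : ∀ u w, u ∉ Z → w ∉ Z → cbar u w = c u w)
    (hcbar2 : ∀ u, u ∉ Z → ∀ h : (Z.filter fun z => (u, z) ∈ A).Nonempty,
      cbar u uZ = (Z.filter fun z => (u, z) ∈ A).inf' h fun z => c u z)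
    (hcbar3 : ∀ w, w ∉ Z → ∀ h : (Z.filter fun z => (z, w) ∈ A).Nonempty,
      cbar uZ w = (Z.filter fun z => (z, w) ∈ A).inf' h fun z => c z w)
    (hπbar1 : πbar uZ = ∑ z ∈ Z, π z)
    (hπbar2 : ∀ u, u ∉ Z → πbar u = π u)
    (hπbar3 : ∀ u ∈ Z, u ≠ uZ → πbar u = 0)
    (x : V → V → ℝ) (p : V → ℝ) (hfeas : LPfeas A r x p) :
    (LPfeas Abar r
        (fun u w =>
          if u ∈ Z then (if u = uZ ∧ w ∉ Z then ∑ z ∈ Z, x z w else 0)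
          else if w ∈ Z then (if w = uZ then ∑ z ∈ Z, x u z else 0)
          else x u w)
        (fun u => if u = uZ then Z.inf' hZne p else if u ∈ Z then 1 else p u)) ∧
    ((∑ u, ∑ w, cbar u w *
        (if u ∈ Z then (if u = uZ ∧ w ∉ Z then ∑ z ∈ Z, x z w else 0)
         else if w ∈ Z then (if w = uZ then ∑ z ∈ Z, x u z else 0)
         else x u w)) +
      ∑ u, πbar u * (if u = uZ then Z.inf' hZne p else if u ∈ Z then 1 else p u) ≤
        (∑ u, ∑ w, c u w * x u w) + ∑ u, π u * p u) ∧
    lpOpt Abar cbar πbar r ≤ lpOpt A c π r :=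
  lp_contract_cycle_general A Abar r uZ Z hZne c cbar π πbar hc hπ hrZ huZ hAbar hcbar1 hcbar2
    hcbar3 hπbar1 hπbar2 hπbar3 x p hfeas
end

section
/- Let Q* be an r-rooted walk with cost at most L in a digraph with costs c ≥ 0 and rewards π ≥ 0 on node set N, and suppose trees T₁, T₂ with weights a,b ≥ 0, a+b=1 satisfy, for penalties λ₁π and λ₂π respectively (0 ≤ λ₁ ≤ λ₂): c(T_i) + λ_i·π(N∖V(T_i)) ≤ L + λ_i·π(N∖V(Q*)) for i=1,2, and a·c(T₁) + b·c(T₂) = L. Then a·π(V(T₁)) + b·π(V(T₂)) ≥ π(V(Q*)) − (a(λ₂−λ₁)/λ₂)·π(N∖V(T₁)). -/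
open Finset

/-- Core inequality of the binary-search analysis
(Theorem pcabsearch): from the prize-collecting guarantees of the two trees at
multipliers `λ₁ ≤ λ₂` and `a·c(T₁) + b·c(T₂) = L`, the weighted reward of the trees is
at least `π(V(Q*)) − (a(λ₂−λ₁)/λ₂)·π(N∖V(T₁))`.  Here the node set is `N = univ` and
`π(S) = ∑_{v∈S} π v`. -/
theorem binary_search_core
    {V : Type*} [Fintype V] [DecidableEq V]
    (π : V → ℝ) (hπ : ∀ v, 0 ≤ π v)
    (VT1 VT2 VQ : Finset V) (c1 c2 L lam1 lam2 a b : ℝ)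
    (hlam1 : 0 < lam1) (hlam12 : lam1 ≤ lam2)
    (ha : 0 ≤ a) (hb : 0 ≤ b) (hab : a + b = 1)
    (h1 : c1 + lam1 * ∑ v ∈ VT1ᶜ, π v ≤ L + lam1 * ∑ v ∈ VQᶜ, π v)
    (h2 : c2 + lam2 * ∑ v ∈ VT2ᶜ, π v ≤ L + lam2 * ∑ v ∈ VQᶜ, π v)
    (hL : a * c1 + b * c2 = L) :
    (∑ v ∈ VQ, π v) - (a * (lam2 - lam1) / lam2) * ∑ v ∈ VT1ᶜ, π v ≤
      a * ∑ v ∈ VT1, π v + b * ∑ v ∈ VT2, π v := by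
  have hlam2 : 0 < lam2 := lt_of_lt_of_le hlam1 hlam12
  set S := ∑ v, π v with hS
  have hc : ∀ A : Finset V, ∑ v ∈ Aᶜ, π v = S - ∑ v ∈ A, π v := by
    intro A
    have := Finset.sum_add_sum_compl A π
    rw [hS]; linarith
  rw [hc VT1, hc VQ] at *
  rw [hc VT2] at h2
  set Q := ∑ v ∈ VQ, π v with hQ
  set T1 := ∑ v ∈ VT1, π v with hT1
  set T2 := ∑ v ∈ VT2, π v with hT2
  have hQS : Q ≤ S := Finset.sum_le_sum_of_subset_of_nonneg (Finset.subset_univ _)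
      (fun v _ _ => hπ v)
  have h1a := mul_le_mul_of_nonneg_left h1 ha
  have h2b := mul_le_mul_of_nonneg_left h2 hb
  have habL : a * L + b * L = L := by rw [← add_mul, hab, one_mul]
  have hG : a * (lam2 - lam1) * Q ≤ a * (lam2 - lam1) * S :=
    mul_le_mul_of_nonneg_left hQS (by nlinarith)
  have hH : a * (lam2 * Q) + b * (lam2 * Q) = lam2 * Q := by
    rw [← add_mul, hab, one_mul]
  rw [div_mul_eq_mul_div, sub_le_iff_le_add, ← sub_le_iff_le_add',
    le_div_iff₀ hlam2]
  nlinarith [h1a, h2b, hG, hH, habL, hL]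
end

section
/- Let D=(N,A) be a bidirected complete digraph with symmetric nonnegative costs c and root r, let n=|N|, and for λ ≥ 0 define penalties π_v(λ) = λ·π_v with π ≡ 1, so that π(S)=|S|. Suppose for each λ we have a tree T_λ rooted at r satisfying c(T_λ) + λ·π(N∖V(T_λ)) ≤ L* + λ·(n − n*) for fixed constants L*, n*. If |V(T_{λ₁})| < k < |V(T_{λ₂})| for some λ₁ < λ₂, and a,b ≥ 0 with a+b=1 are chosen so that a|V(T_{λ₁})| + b|V(T_{λ₂})| = k ≤ n*, then a·c(T_{λ₁}) + b·c(T_{λ₂}) ≤ L* + a(λ₂−λ₁)(n − |V(T_{λ₁})|). -/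
/-- Combining the prize-collecting arborescence guarantees with
uniform penalties `λ₁ < λ₂` for the k-MLP binary search: writing `s₁, s₂` for the
numbers of nodes covered by the two trees, `c₁, c₂` for their costs, if
`cᵢ + λᵢ(n − sᵢ) ≤ L* + λᵢ(n − n*)` for `i = 1, 2`, `a s₁ + b s₂ = k ≤ n* ≤ n`, and
`s₁ < k < s₂`, then `a c₁ + b c₂ ≤ L* + a (λ₂ − λ₁)(n − s₁)`. -/
theorem kmlp_combine
    (lam1 lam2 a b Lstar n nstar k s1 s2 c1 c2 : ℝ)
    (hlam0 : 0 ≤ lam1) (hlam : lam1 < lam2)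
    (ha : 0 ≤ a) (hb : 0 ≤ b) (hab : a + b = 1)
    (h1 : c1 + lam1 * (n - s1) ≤ Lstar + lam1 * (n - nstar))
    (h2 : c2 + lam2 * (n - s2) ≤ Lstar + lam2 * (n - nstar))
    (hs1 : s1 < k) (hs2 : k < s2)
    (hk : a * s1 + b * s2 = k)
    (hkn : k ≤ nstar) (hnn : nstar ≤ n) :
    a * c1 + b * c2 ≤ Lstar + a * (lam2 - lam1) * (n - s1) := by
  have hb2 : b = 1 - a := by linarith
  subst hb2
  nlinarith [mul_le_mul_of_nonneg_left h1 ha,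
    mul_le_mul_of_nonneg_left h2 hb,
    mul_nonneg (mul_nonneg ha (le_of_lt (sub_pos.mpr hlam))) (sub_nonneg.mpr hnn),
    mul_nonneg (le_trans hlam0 (le_of_lt hlam)) (by linarith : (0:ℝ) ≤ nstar - (a*s1+(1-a)*s2)),
    mul_nonneg ha (sub_nonneg.mpr hnn)]
end

section
/- Let (V,c) be a metric with root r, rewards π ≥ 0, and budget B; fix w with c_{rw} ≤ B/2, and let V̄_w = {u : c_{ru} ≤ c_{rw}}. Let C* be a cycle through r and w contained in V̄_w with c(C*) ≤ B, and let Y be any value satisfying Y ≤ z for every feasible objective value z of the prize-collecting walks LP on the bidirection of the complete graph on V̄_w with penalties λπ. Then π(V(C*)) ≤ 2π(V̄_w) − π_r − π_w + (B − 2Y)/λ for every λ > 0. -/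
/-!
Cut `C*` at `r` and `w` into two walks from `r` through `w`. A simple walk from `r`, used once,
with penalty `1` on the vertices it misses, is feasible for the LP, and the feasible region is
convex; so the average of the two walks is feasible. Its arc cost is `c(C*)/2 ≤ B/2`, and its
penalty is `λ(π(V̄_w) − (π(P₁) + π(P₂))/2) ≤ λ(π(V̄_w) − (π(V(C*)) + π_r + π_w)/2)` because the
walks cover `C*` and both contain `r` and `w` (and `π ≥ 0`). Comparing with `Y` and rearranging
gives the bound.
-/

open Finset

theorem sum_union_add_pair_le {ι : Type*} [DecidableEq ι] {f : ι → ℝ} (hf : ∀ i, 0 ≤ f i)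
    {s t : Finset ι} {a b : ι} (hab : a ≠ b) (has : a ∈ s) (hat : a ∈ t) (hbs : b ∈ s)
    (hbt : b ∈ t) :
    ∑ i ∈ s ∪ t, f i + (f a + f b) ≤ ∑ i ∈ s, f i + ∑ i ∈ t, f i := by
  rw [← sum_union_inter, ← sum_pair hab]
  gcongr
  · exact fun i _ _ => hf i
  · exact insert_subset_iff.2 ⟨mem_inter.2 ⟨has, hat⟩,
      singleton_subset_iff.2 (mem_inter.2 ⟨hbs, hbt⟩)⟩

namespace CycleOrienteering

variable {V : Type*}

def arcs (P : List V) : List (V × V) := P.zip P.tail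

def cycleArcs (L : List V) : List (V × V) := L.zip (L.rotate 1)

def arcCost (c : V → V → ℝ) (E : List (V × V)) : ℝ := (E.map fun q => c q.1 q.2).sum

@[simp] lemma arcs_nil : arcs ([] : List V) = [] := rfl

@[simp] lemma arcs_singleton (a : V) : arcs [a] = [] := rfl

@[simp] lemma arcs_cons_cons (a b : V) (t : List V) :
    arcs (a :: b :: t) = (a, b) :: arcs (b :: t) := rfl

lemma arcs_append_cons : ∀ (A : List V) (m : V) (B : List V),
    arcs (A ++ m :: B) = arcs (A ++ [m]) ++ arcs (m :: B)
  | [], _, _ => rfl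
  | [_], _, _ => rfl
  | a :: b :: A, m, B => by
    simp only [List.cons_append, arcs_cons_cons]
    rw [← List.cons_append, arcs_append_cons (b :: A) m B, List.cons_append]

lemma arcs_reverse : ∀ P : List V, arcs P.reverse = (arcs P).reverse.map Prod.swap
  | [] => rfl
  | [_] => rfl
  | a :: b :: t => by
    rw [List.reverse_cons, List.reverse_cons, List.append_assoc, List.singleton_append,
      arcs_append_cons, ← List.reverse_cons, arcs_reverse (b :: t)]
    simp

lemma mem_of_mem_arcs {P : List V} {u v : V} (h : (u, v) ∈ arcs P) : u ∈ P ∧ v ∈ P :=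
  (List.of_mem_zip h).imp id List.mem_of_mem_tail

lemma ne_of_mem_arcs : ∀ {P : List V}, P.Nodup → ∀ {u v : V}, (u, v) ∈ arcs P → u ≠ v
  | [], _, _, _, h => by simp at h
  | [_], _, _, _, h => by simp at h
  | a :: b :: t, hP, u, v, h => by
    rcases List.mem_cons.1 h with h | h
    · obtain ⟨rfl, rfl⟩ := Prod.mk.inj h
      exact fun hab => (List.nodup_cons.1 hP).1 (hab ▸ List.mem_cons_self)
    · exact ne_of_mem_arcs hP.of_cons h

lemma exists_mem_arcs_entering (S : Set V) :
    ∀ {a : V} {t : List V}, a ∉ S → ∀ v ∈ a :: t, v ∈ S →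
      ∃ u z, (u, z) ∈ arcs (a :: t) ∧ u ∉ S ∧ z ∈ S
  | a, [], ha, v, hv, hvS => by
    rw [List.mem_singleton.1 hv] at hvS
    exact absurd hvS ha
  | a, b :: t, ha, v, hv, hvS => by
    by_cases hb : b ∈ S
    · exact ⟨a, b, List.mem_cons_self, ha, hb⟩
    · have hvt : v ∈ b :: t := (List.mem_cons.1 hv).resolve_left (by rintro rfl; exact ha hvS)
      obtain ⟨u, z, hE, hu, hz⟩ := exists_mem_arcs_entering S hb v hvt hvS
      exact ⟨u, z, List.mem_cons_of_mem _ hE, hu, hz⟩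

lemma map_fst_arcs_sublist : ∀ P : List V, ((arcs P).map Prod.fst).Sublist P
  | [] => List.Sublist.slnil
  | [_] => List.nil_sublist _
  | a :: b :: t => by
    simpa using (map_fst_arcs_sublist (b :: t)).cons_cons a

lemma map_snd_arcs (P : List V) : (arcs P).map Prod.snd = P.tail :=
  List.map_snd_zip (by simp)

lemma cycleArcs_rotate (L : List V) (n : ℕ) :
    cycleArcs (L.rotate n) = (cycleArcs L).rotate n := by
  apply List.ext_getElem
  · simp [cycleArcs]
  · intro i h₁ h₂
    have hmod : (i + (n + 1)) % L.length = ((i + n) % L.length + 1) % L.length := by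
      rw [Nat.mod_add_mod, Nat.add_assoc]
    simp only [cycleArcs, List.rotate_rotate, List.getElem_zip, List.getElem_rotate,
      List.length_zip, List.length_rotate, min_self, hmod]

lemma cycleArcs_cons (a : V) (T : List V) : cycleArcs (a :: T) = arcs (a :: T ++ [a]) := by
  have h := List.zip_append (l₁ := a :: T) (l₂ := T ++ [a]) (r₁ := [a]) (r₂ := []) (by simp)
  simpa [cycleArcs, arcs, List.rotate_cons_succ] using h.symm

variable (c : V → V → ℝ)

@[simp] lemma arcCost_append (E F : List (V × V)) :
    arcCost c (E ++ F) = arcCost c E + arcCost c F := by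
  simp [arcCost]

lemma arcCost_perm {E F : List (V × V)} (h : E.Perm F) : arcCost c E = arcCost c F :=
  (h.map _).sum_eq

lemma arcCost_arcs_reverse (hsym : ∀ u v, c u v = c v u) (P : List V) :
    arcCost c (arcs P.reverse) = arcCost c (arcs P) := by
  simp only [arcs_reverse, arcCost, List.map_map, List.map_reverse, List.sum_reverse,
    Function.comp_def, Prod.fst_swap, Prod.snd_swap, hsym]

lemma exists_cons_perm_cycleArcs_cost {L : List V} {r : V} (hr : r ∈ L) :
    ∃ T, (r :: T).Perm L ∧ arcCost c (cycleArcs (r :: T)) = arcCost c (cycleArcs L) := by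
  obtain ⟨s, t, rfl⟩ := List.append_of_mem hr
  have hrot : (s ++ r :: t).rotate s.length = r :: (t ++ s) := by
    rw [List.rotate_append_length_eq, List.cons_append]
  refine ⟨t ++ s, hrot ▸ List.rotate_perm _ _, ?_⟩
  rw [← hrot, cycleArcs_rotate]
  exact arcCost_perm c (List.rotate_perm _ _)

section

variable [DecidableEq V]

lemma exists_two_walks_of_cycle (hsym : ∀ u v, c u v = c v u) {L : List V} (hL : L.Nodup)
    {r w : V} (hr : r ∈ L) (hw : w ∈ L) (hrw : r ≠ w) :
    ∃ t₁ t₂ : List V, (r :: t₁).Nodup ∧ (r :: t₂).Nodup ∧ w ∈ t₁ ∧ w ∈ t₂ ∧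
      (r :: t₁).toFinset ∪ (r :: t₂).toFinset = L.toFinset ∧
      arcCost c (arcs (r :: t₁)) + arcCost c (arcs (r :: t₂)) = arcCost c (cycleArcs L) := by
  obtain ⟨T, hperm, hcost⟩ := exists_cons_perm_cycleArcs_cost c hr
  have hwT : w ∈ T := (List.mem_cons.1 (hperm.mem_iff.2 hw)).resolve_left (Ne.symm hrw)
  obtain ⟨T₁, T₂, rfl⟩ := List.append_of_mem hwT
  have hnd : (r :: (T₁ ++ w :: T₂)).Nodup := hperm.nodup_iff.2 hL
  refine ⟨T₁ ++ [w], T₂.reverse ++ [w], ?_, ?_, by simp, by simp, ?_, ?_⟩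
  · exact ((List.nil_sublist T₂).cons_cons w |>.append_left T₁ |>.cons_cons r).nodup hnd
  · refine (((List.perm_append_singleton w _).trans ((List.reverse_perm T₂).cons w)).cons r
      |>.nodup_iff).2 ?_
    exact ((List.sublist_append_right T₁ (w :: T₂)).cons_cons r).nodup hnd
  · ext v
    simp only [mem_union, List.mem_toFinset, ← hperm.mem_iff]
    simp only [List.mem_cons, List.mem_append, List.mem_reverse]
    tauto
  · have hsplit : r :: (T₁ ++ w :: T₂) ++ [r] = (r :: T₁) ++ w :: (T₂ ++ [r]) := by simp
    have hrev : (w :: (T₂ ++ [r])).reverse = r :: (T₂.reverse ++ [w]) := by simp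
    rw [← hcost, cycleArcs_cons, hsplit, arcs_append_cons, arcCost_append, ← hrev,
      arcCost_arcs_reverse c hsym, List.cons_append]

end

section

variable [Fintype V]

def walkLPObjective (π : V → ℝ) (lam : ℝ) (U : Finset V) (x : V → V → ℝ) (p : V → ℝ) : ℝ :=
  (∑ u, ∑ v, c u v * x u v) + lam * ∑ v ∈ U, π v * p v

lemma walkLPObjective_convexComb {U : Finset V} (π : V → ℝ) (lam : ℝ) (x₁ x₂ : V → V → ℝ)
    (p₁ p₂ : V → ℝ) (a b : ℝ) :
    walkLPObjective c π lam U (fun u v => a * x₁ u v + b * x₂ u v) (fun v => a * p₁ v + b * p₂ v)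
      = a * walkLPObjective c π lam U x₁ p₁ + b * walkLPObjective c π lam U x₂ p₂ := by
  simp only [walkLPObjective, mul_add, sum_add_distrib, mul_sum]
  simp only [mul_left_comm]
  ring

end

variable [DecidableEq V]

def arcFlow (E : List (V × V)) (u v : V) : ℝ := E.count (u, v)

lemma arcFlow_nonneg (E : List (V × V)) (u v : V) : 0 ≤ arcFlow E u v := Nat.cast_nonneg _

lemma arcFlow_cons (q : V × V) (E : List (V × V)) (u v : V) :
    arcFlow (q :: E) u v = arcFlow E u v + if q = (u, v) then 1 else 0 := by
  simp [arcFlow, List.count_cons]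

variable [Fintype V]

lemma sum_sum_mul_arcFlow (E : List (V × V)) :
    ∑ u, ∑ v, c u v * arcFlow E u v = arcCost c E := by
  induction E with
  | nil => simp [arcFlow, arcCost]
  | cons q E ih =>
    simp only [arcFlow_cons, mul_add, sum_add_distrib, ih, arcCost, List.map_cons,
      List.sum_cons, Prod.ext_iff, mul_ite, mul_one, mul_zero]
    simp [ite_and, add_comm]

lemma sum_arcFlow_out_eq_count (E : List (V × V)) (v : V) :
    ∑ u, arcFlow E v u = (E.map Prod.fst).count v := by
  induction E with
  | nil => simp [arcFlow]
  | cons q E ih =>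
    simp only [arcFlow_cons, sum_add_distrib, ih, Prod.ext_iff, List.map_cons, List.count_cons]
    split_ifs <;> simp_all

lemma sum_arcFlow_in_eq_count (E : List (V × V)) (v : V) :
    ∑ u, arcFlow E u v = (E.map Prod.snd).count v := by
  induction E with
  | nil => simp [arcFlow]
  | cons q E ih =>
    simp only [arcFlow_cons, sum_add_distrib, ih, Prod.ext_iff, List.map_cons, List.count_cons]
    split_ifs <;> simp_all

lemma sum_arcFlow_arcs_out_le_in {a v : V} (t : List V) (hv : v ≠ a) :
    ∑ u, arcFlow (arcs (a :: t)) v u ≤ ∑ u, arcFlow (arcs (a :: t)) u v := by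
  rw [sum_arcFlow_out_eq_count, sum_arcFlow_in_eq_count, map_snd_arcs, List.tail_cons]
  exact_mod_cast ((map_fst_arcs_sublist _).count_le v).trans_eq
    (List.count_cons_of_ne hv.symm)

lemma one_le_sum_arcFlow_arcs_cut {a v : V} {t : List V} {S : Finset V} (ha : a ∉ S)
    (hv : v ∈ a :: t) (hvS : v ∈ S) :
    1 ≤ ∑ u ∈ Sᶜ, ∑ z ∈ S, arcFlow (arcs (a :: t)) u z := by
  obtain ⟨u, z, hE, hu, hz⟩ := exists_mem_arcs_entering (S : Set V) ha v hv hvS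
  calc (1 : ℝ) ≤ arcFlow (arcs (a :: t)) u z := by
        unfold arcFlow; exact_mod_cast List.count_pos_iff.2 hE
    _ ≤ ∑ z ∈ S, arcFlow (arcs (a :: t)) u z :=
        single_le_sum (fun z _ => arcFlow_nonneg _ u z) hz
    _ ≤ ∑ u ∈ Sᶜ, ∑ z ∈ S, arcFlow (arcs (a :: t)) u z :=
        single_le_sum (fun u _ => sum_nonneg fun z _ => arcFlow_nonneg _ u z)
          (mem_compl.2 hu)

/-- Feasibility in the prize-collecting walks LP rooted at `r` on the bidirected complete graph
on `U`: `x` is the arc vector and `p` the vector of penalty variables. -/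
structure IsWalkLPSolution (U : Finset V) (r : V) (x : V → V → ℝ) (p : V → ℝ) : Prop where
  arc_nonneg : ∀ u v, 0 ≤ x u v
  penalty_nonneg : ∀ v, 0 ≤ p v
  support : ∀ u v, ¬(u ∈ U ∧ v ∈ U ∧ u ≠ v) → x u v = 0
  cut : ∀ S ⊆ U, r ∉ S → ∀ v ∈ S, 1 ≤ (∑ u ∈ Sᶜ, ∑ z ∈ S, x u z) + p v
  conservation : ∀ v, v ≠ r → ∑ u, x v u ≤ ∑ u, x u v

variable {U : Finset V} {r : V}

lemma IsWalkLPSolution.convexComb {x₁ x₂ : V → V → ℝ} {p₁ p₂ : V → ℝ}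
    (h₁ : IsWalkLPSolution U r x₁ p₁) (h₂ : IsWalkLPSolution U r x₂ p₂)
    {a b : ℝ} (ha : 0 ≤ a) (hb : 0 ≤ b) (hab : a + b = 1) :
    IsWalkLPSolution U r (fun u v => a * x₁ u v + b * x₂ u v)
      (fun v => a * p₁ v + b * p₂ v) where
  arc_nonneg u v := by
    have := h₁.arc_nonneg u v; have := h₂.arc_nonneg u v; positivity
  penalty_nonneg v := by
    have := h₁.penalty_nonneg v; have := h₂.penalty_nonneg v; positivity
  support u v huv := by simp [h₁.support u v huv, h₂.support u v huv]
  cut S hS hr v hv := by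
    have := h₁.cut S hS hr v hv
    have := h₂.cut S hS hr v hv
    simp only [sum_add_distrib, ← mul_sum]
    nlinarith
  conservation v hv := by
    have := h₁.conservation v hv
    have := h₂.conservation v hv
    simp only [sum_add_distrib, ← mul_sum]
    nlinarith

lemma isWalkLPSolution_arcFlow {t : List V} (ht : (r :: t).Nodup) (hU : ∀ v ∈ r :: t, v ∈ U) :
    IsWalkLPSolution U r (arcFlow (arcs (r :: t))) (fun v => if v ∈ r :: t then 0 else 1) where
  arc_nonneg := arcFlow_nonneg _
  penalty_nonneg v := by split_ifs <;> norm_num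
  support u v huv := by
    refine Nat.cast_eq_zero.2 (List.count_eq_zero.2 fun h => huv ?_)
    obtain ⟨hu, hv⟩ := mem_of_mem_arcs h
    exact ⟨hU u hu, hU v hv, ne_of_mem_arcs ht h⟩
  cut S _ hr v hvS := by
    by_cases hv : v ∈ r :: t
    · simpa [hv] using one_le_sum_arcFlow_arcs_cut hr hv hvS
    · simpa [hv] using sum_nonneg fun u _ => sum_nonneg fun z _ => arcFlow_nonneg _ u z
  conservation _ hv := sum_arcFlow_arcs_out_le_in t hv

lemma walkLPObjective_arcFlow (π : V → ℝ) (lam : ℝ) {t : List V} (hU : ∀ v ∈ r :: t, v ∈ U) :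
    walkLPObjective c π lam U (arcFlow (arcs (r :: t))) (fun v => if v ∈ r :: t then 0 else 1)
      = arcCost c (arcs (r :: t)) + lam * (∑ v ∈ U, π v - ∑ v ∈ (r :: t).toFinset, π v) := by
  have hsub : (r :: t).toFinset ⊆ U := fun v hv => hU v (List.mem_toFinset.1 hv)
  rw [walkLPObjective, sum_sum_mul_arcFlow, ← sum_sdiff hsub]
  have hout : ∀ v ∈ U \ (r :: t).toFinset, π v * (if v ∈ r :: t then 0 else 1) = π v :=
    fun v hv => by simp [List.mem_toFinset.not.1 (mem_sdiff.1 hv).2]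
  have hin : ∀ v ∈ (r :: t).toFinset, π v * (if v ∈ r :: t then 0 else 1) = 0 :=
    fun v hv => by simp [List.mem_toFinset.1 hv]
  rw [sum_congr rfl hout, sum_eq_zero hin, sum_sdiff_eq_sub hsub, add_zero]

end CycleOrienteering

open CycleOrienteering

theorem cycle_orienteering_upper_bound_general
    {V : Type*} [Fintype V] [DecidableEq V]
    (c : V → V → ℝ) (π : V → ℝ) (r w : V) (B lam Y : ℝ)
    (hsym : ∀ u v, c u v = c v u)
    (hπ : ∀ v, 0 ≤ π v) (hlam : 0 < lam)
    (hrw : r ≠ w)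
    (L : List V) (hLnd : L.Nodup) (hrL : r ∈ L) (hwL : w ∈ L)
    (hLVw : ∀ v ∈ L, c r v ≤ c r w)
    (hLcost : ((L.zip (L.rotate 1)).map fun q => c q.1 q.2).sum ≤ B)
    (hY : ∀ (x : V → V → ℝ) (p : V → ℝ),
      (∀ u v, 0 ≤ x u v) → (∀ u, 0 ≤ p u) →
      (∀ u v, ¬(c r u ≤ c r w ∧ c r v ≤ c r w ∧ u ≠ v) → x u v = 0) →
      (∀ S : Finset V, (∀ v ∈ S, c r v ≤ c r w) → r ∉ S → ∀ v ∈ S,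
        1 ≤ (∑ u ∈ Sᶜ, ∑ z ∈ S, x u z) + p v) →
      (∀ v, v ≠ r → (∑ u, x v u) ≤ ∑ u, x u v) →
      Y ≤ (∑ u, ∑ v, c u v * x u v) +
        lam * ∑ v ∈ Finset.univ.filter (fun u => c r u ≤ c r w), π v * p v) :
    ∑ v ∈ L.toFinset, π v ≤
      2 * (∑ v ∈ Finset.univ.filter fun u => c r u ≤ c r w, π v) - π r - π w
        + (B - 2 * Y) / lam := by
  set U := univ.filter fun u => c r u ≤ c r w
  have hmemU : ∀ v, v ∈ U ↔ c r v ≤ c r w := by simp [U]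
  obtain ⟨t₁, t₂, hnd₁, hnd₂, hw₁, hw₂, hcover, hcost⟩ :=
    exists_two_walks_of_cycle c hsym hLnd hrL hwL hrw
  have hU : ∀ t, (r :: t).toFinset ⊆ L.toFinset → ∀ v ∈ r :: t, v ∈ U := fun t ht v hv =>
    (hmemU v).2 (hLVw v (List.mem_toFinset.1 (ht (List.mem_toFinset.2 hv))))
  have hU₁ := hU t₁ (hcover ▸ subset_union_left)
  have hU₂ := hU t₂ (hcover ▸ subset_union_right)
  have hsol := (isWalkLPSolution_arcFlow hnd₁ hU₁).convexComb
    (isWalkLPSolution_arcFlow hnd₂ hU₂) (a := 1 / 2) (b := 1 / 2) (by norm_num) (by norm_num)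
    (by norm_num)
  have hY' : Y ≤ walkLPObjective c π lam U _ _ := hY _ _ hsol.arc_nonneg hsol.penalty_nonneg
    (fun u v h => hsol.support u v (by simpa only [hmemU] using h))
    (fun S hS => hsol.cut S fun v hv => (hmemU v).2 (hS v hv)) hsol.conservation
  rw [walkLPObjective_convexComb, walkLPObjective_arcFlow c π lam hU₁,
    walkLPObjective_arcFlow c π lam hU₂] at hY'
  have hπL := hcover ▸ sum_union_add_pair_le hπ hrw (List.mem_toFinset.2 List.mem_cons_self)
    (List.mem_toFinset.2 List.mem_cons_self) (List.mem_toFinset.2 (List.mem_cons_of_mem r hw₁))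
    (List.mem_toFinset.2 (List.mem_cons_of_mem r hw₂))
  have hB : arcCost c (arcs (r :: t₁)) + arcCost c (arcs (r :: t₂)) ≤ B := hcost ▸ hLcost
  have hdiv : ∑ v ∈ L.toFinset, π v + π r + π w - 2 * ∑ v ∈ U, π v ≤ (B - 2 * Y) / lam := by
    rw [le_div_iff₀ hlam]
    nlinarith [mul_le_mul_of_nonneg_left hπL hlam.le]
  linarith

/-- Upper bound for cycle orienteering: let `C*` (vertex list `L`) be
a cycle through `r` and `w` contained in `V̄_w = {u : c r u ≤ c r w}` with cost at most
`B`, and let `Y` be a lower bound on the objective value of every feasible solution of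
the prize-collecting walks LP on the bidirection of the complete graph on `V̄_w` with
penalties `λ·π`.  Then `π(V(C*)) ≤ 2π(V̄_w) − π r − π w + (B − 2Y)/λ`. -/
theorem cycle_orienteering_upper_bound
    {V : Type*} [Fintype V] [DecidableEq V]
    (c : V → V → ℝ) (π : V → ℝ) (r w : V) (B lam Y : ℝ)
    (hsym : ∀ u v, c u v = c v u) (hc : ∀ u v, 0 ≤ c u v)
    (hπ : ∀ v, 0 ≤ π v) (hlam : 0 < lam)
    (hrw : r ≠ w) (hrwB : c r w ≤ B / 2)
    (L : List V) (hLnd : L.Nodup) (hrL : r ∈ L) (hwL : w ∈ L)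
    (hLVw : ∀ v ∈ L, c r v ≤ c r w)
    (hLcost : ((L.zip (L.rotate 1)).map fun q => c q.1 q.2).sum ≤ B)
    (hY : ∀ (x : V → V → ℝ) (p : V → ℝ),
      (∀ u v, 0 ≤ x u v) → (∀ u, 0 ≤ p u) →
      (∀ u v, ¬(c r u ≤ c r w ∧ c r v ≤ c r w ∧ u ≠ v) → x u v = 0) →
      (∀ S : Finset V, (∀ v ∈ S, c r v ≤ c r w) → r ∉ S → ∀ v ∈ S,
        1 ≤ (∑ u ∈ Sᶜ, ∑ z ∈ S, x u z) + p v) →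
      (∀ v, v ≠ r → (∑ u, x v u) ≤ ∑ u, x u v) →
      Y ≤ (∑ u, ∑ v, c u v * x u v) +
        lam * ∑ v ∈ Finset.univ.filter (fun u => c r u ≤ c r w), π v * p v) :
    ∑ v ∈ L.toFinset, π v ≤
      2 * (∑ v ∈ Finset.univ.filter fun u => c r u ≤ c r w, π v) - π r - π w
        + (B - 2 * Y) / lam :=
  cycle_orienteering_upper_bound_general c π r w B lam Y hsym hπ hlam hrw L hLnd hrL hwL hLVw hLcost
    hY
end

section
/- For nonnegative reals with the following structure: suppose B + λ₁·π(W) − λ₁·S ≤ a·Y₁ + b·Y₂ where a,b ≥ 0, a+b = 1, 0 < λ₁ ≤ λ₂ ≤ λ₁ + ε·low²·LB with low ≤ λ₂, low·π(W∖{r}) = 1, LB ≤ U, and additionally B + λ₂·(a·D₁ + b·D₂) ≤ a·Y₁ + b·Y₂ + ελ₂·U where S = π(W) − (a·P₁ + b·P₂) relates via D_i = π(W) − P_i. If moreover B < a·Y₁ + b·Y₂ and π(W) + min{(B−Y₁)/λ₁, (B−Y₂)/λ₂} ≥ U, then a·P₁ + b·P₂ ≥ (1−ε)·U. -/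
/-- The final chain of inequalities of Theorem lpboundsthm (b):
with `Pᵢ` the tree rewards, `Yᵢ` the dual values, `piW = π(W)`, `piW' = π(W∖{r})`,
`U` the computed upper bound, the stated hypotheses imply
`a·P₁ + b·P₂ ≥ (1 − ε)·U`. -/
theorem lp_guarantee_chain
    (B lam1 lam2 a b Y1 Y2 eps low LB U piW piW' P1 P2 D1 D2 S : ℝ)
    (ha : 0 ≤ a) (hb : 0 ≤ b) (hab : a + b = 1)
    (hlam1 : 0 < lam1) (hlam12 : lam1 ≤ lam2)
    (hlam2 : lam2 ≤ lam1 + eps * low ^ 2 * LB)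
    (hlow : low ≤ lam2) (hlowW : low * piW' = 1) (hLBU : LB ≤ U)
    (hS : S = piW - (a * P1 + b * P2))
    (hD1 : D1 = piW - P1) (hD2 : D2 = piW - P2)
    (h1 : B + lam1 * piW - lam1 * S ≤ a * Y1 + b * Y2)
    (h2 : B + lam2 * (a * D1 + b * D2) ≤ a * Y1 + b * Y2 + eps * lam2 * U)
    (hB : B < a * Y1 + b * Y2)
    (hU : U ≤ piW + min ((B - Y1) / lam1) ((B - Y2) / lam2)) :
    (1 - eps) * U ≤ a * P1 + b * P2 := by
  subst hS hD1 hD2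
  have hlam2pos : 0 < lam2 := lt_of_lt_of_le hlam1 hlam12
  set m := min ((B - Y1) / lam1) ((B - Y2) / lam2) with hm
  have hm1 : lam1 * m ≤ B - Y1 := by
    have h := min_le_left ((B - Y1) / lam1) ((B - Y2) / lam2)
    rw [← hm, le_div_iff₀ hlam1] at h
    linarith [h]
  have hm2 : lam2 * m ≤ B - Y2 := by
    have h := min_le_right ((B - Y1) / lam1) ((B - Y2) / lam2)
    rw [← hm, le_div_iff₀ hlam2pos] at h
    linarith [h]
  have ha1 : a * (lam1 * m) ≤ a * (B - Y1) := mul_le_mul_of_nonneg_left hm1 ha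
  have hb2 : b * (lam2 * m) ≤ b * (B - Y2) := mul_le_mul_of_nonneg_left hm2 hb
  have habB : a * B + b * B = B := by linear_combination B * hab
  have habm : a * (lam2 * m) + b * (lam2 * m) = lam2 * m := by
    linear_combination (lam2 * m) * hab
  have habpw : a * (lam2 * piW) + b * (lam2 * piW) = lam2 * piW := by
    linear_combination (lam2 * piW) * hab
  have habU : a * (lam2 * U) + b * (lam2 * U) = lam2 * U := by
    linear_combination (lam2 * U) * hab
  have hmneg : m < 0 := by
    by_contra h
    push_neg at h
    nlinarith [mul_nonneg (mul_nonneg ha hlam1.le) h, mul_nonneg (mul_nonneg hb hlam2pos.le) h]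
  have hcoef : a * (lam2 - lam1) * m ≤ 0 :=
    mul_nonpos_of_nonneg_of_nonpos (mul_nonneg ha (sub_nonneg.mpr hlam12)) hmneg.le
  have key : lam2 * m ≤ B - (a * Y1 + b * Y2) := by linarith [ha1, hb2, hcoef, habB, habm]
  have hUle : lam2 * U ≤ lam2 * piW + lam2 * m := by nlinarith
  have final : lam2 * ((1 - eps) * U) ≤ lam2 * (a * P1 + b * P2) := by linarith [h2, hUle, key, habpw]
  exact le_of_mul_le_mul_left final hlam2pos
end
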